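/- arXiv:0901.1171 — 10 statements merged into one kernel-verified Lean document; each statement's English description precedes it below -/
import Mathlib

section
/- Let A ∈ ℂ^{n×n} be positive semidefinite and B ∈ ℂ^{n×n} Hermitian. If the number of negative eigenvalues (counted with multiplicity) of A + B equals the number of negative eigenvalues of B, then the kernel of A + B is contained in the kernel of A. -/
/-!
Let `C = A + B` and suppose `(A + B) x = 0` but `A x ≠ 0`. The form of `C` is negative definite
on the span `W` of its eigenvectors with negative eigenvalues. Since `C` is Hermitian and `C x = 0`,
the form of `C` at `w + c x` equals its value at `w`, so the form of `B = C - A` is negative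
definite on `W ⊕ ℂ x`: for `w ≠ 0` because `A ≥ 0`, and for `w = 0` because `⟨A x, x⟩ > 0`.
A subspace on which the form of `B` is negative definite meets the span of the eigenvectors of `B`
with nonnegative eigenvalues trivially, so its dimension is at most `ν₋(B)`. Hence
`ν₋(A + B) + 1 ≤ ν₋(B)`.
-/

open Matrix
open scoped ComplexOrder

/-- The number of negative eigenvalues (counted with multiplicity) of a Hermitian matrix. -/
noncomputable def negEigCount {n : ℕ} {M : Matrix (Fin n) (Fin n) ℂ}
    (hM : M.IsHermitian) : ℕ :=
  Nat.card {i : Fin n // hM.eigenvalues i < 0}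

open Module Submodule

section

variable {𝕜 ι : Type*} [RCLike 𝕜] [Fintype ι]

def Matrix.IsNegDefOn (M : Matrix ι ι 𝕜) (V : Submodule 𝕜 (ι → 𝕜)) : Prop :=
  ∀ v ∈ V, v ≠ 0 → star v ⬝ᵥ M *ᵥ v < 0

namespace Matrix.IsHermitian

variable [DecidableEq ι] {M : Matrix ι ι 𝕜} (hM : M.IsHermitian)

noncomputable def eigenbasis : Basis ι 𝕜 (ι → 𝕜) :=
  hM.eigenvectorBasis.toBasis.map (WithLp.linearEquiv 2 𝕜 (ι → 𝕜))

@[simp]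
lemma eigenbasis_apply (i : ι) : hM.eigenbasis i = ⇑(hM.eigenvectorBasis i) := by
  simp [eigenbasis]

lemma star_eigenbasis_dotProduct (i j : ι) :
    star (hM.eigenbasis i) ⬝ᵥ hM.eigenbasis j = if i = j then 1 else 0 := by
  rw [eigenbasis_apply, eigenbasis_apply, dotProduct_comm,
    ← EuclideanSpace.inner_eq_star_dotProduct]
  exact orthonormal_iff_ite.1 hM.eigenvectorBasis.orthonormal i j

lemma mulVec_eigenbasis (i : ι) :
    M *ᵥ hM.eigenbasis i = (hM.eigenvalues i : 𝕜) • hM.eigenbasis i := by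
  rw [eigenbasis_apply, hM.mulVec_eigenvectorBasis, RCLike.real_smul_eq_coe_smul (K := 𝕜)]

lemma star_dotProduct_mulVec_eq_sum (v : ι → 𝕜) :
    star v ⬝ᵥ M *ᵥ v = ((∑ i, hM.eigenvalues i * ‖hM.eigenbasis.repr v i‖ ^ 2 : ℝ) : 𝕜) := by
  conv_lhs => rw [← hM.eigenbasis.sum_repr v]
  simp only [mulVec_sum, mulVec_smul, mulVec_eigenbasis, star_sum, star_smul, sum_dotProduct,
    dotProduct_sum, smul_dotProduct, dotProduct_smul, star_eigenbasis_dotProduct]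
  simp [RCLike.mul_conj, mul_comm, mul_left_comm]

noncomputable def spectralSpan (S : Set ι) : Submodule 𝕜 (ι → 𝕜) :=
  span 𝕜 (hM.eigenbasis '' S)

lemma finrank_spectralSpan (S : Set ι) : finrank 𝕜 (hM.spectralSpan S) = Nat.card S := by
  classical
  rw [spectralSpan, Set.image_eq_range, Nat.card_eq_fintype_card]
  exact finrank_span_eq_card (hM.eigenbasis.linearIndependent.comp _ Subtype.val_injective)

lemma eigenbasis_repr_eq_zero_of_mem_spectralSpan {S : Set ι} {v : ι → 𝕜}
    (hv : v ∈ hM.spectralSpan S) {i : ι} (hi : i ∉ S) : hM.eigenbasis.repr v i = 0 :=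
  Finsupp.notMem_support_iff.1 fun h => hi (hM.eigenbasis.mem_span_image.1 hv h)

lemma star_dotProduct_mulVec_nonneg_of_mem_spectralSpan {v : ι → 𝕜}
    (hv : v ∈ hM.spectralSpan {i | hM.eigenvalues i < 0}ᶜ) : 0 ≤ star v ⬝ᵥ M *ᵥ v := by
  rw [hM.star_dotProduct_mulVec_eq_sum, RCLike.ofReal_nonneg]
  refine Finset.sum_nonneg fun i _ => ?_
  by_cases hi : hM.eigenvalues i < 0
  · simp [hM.eigenbasis_repr_eq_zero_of_mem_spectralSpan hv (not_not.2 hi)]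
  · exact mul_nonneg (not_lt.1 hi) (sq_nonneg _)

lemma isNegDefOn_spectralSpan : M.IsNegDefOn (hM.spectralSpan {i | hM.eigenvalues i < 0}) := by
  intro v hv hv0
  obtain ⟨j, hj⟩ : ∃ j, hM.eigenbasis.repr v j ≠ 0 := by
    by_contra! h
    exact hv0 (hM.eigenbasis.ext_elem_iff.2 (by simpa using h))
  have hjneg : hM.eigenvalues j < 0 := by
    by_contra hj'
    exact hj (hM.eigenbasis_repr_eq_zero_of_mem_spectralSpan hv hj')
  rw [hM.star_dotProduct_mulVec_eq_sum, RCLike.ofReal_lt_zero]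
  refine Finset.sum_neg' (fun i _ => ?_) ⟨j, Finset.mem_univ j, ?_⟩
  · by_cases hi : hM.eigenvalues i < 0
    · exact mul_nonpos_of_nonpos_of_nonneg hi.le (sq_nonneg _)
    · simp [hM.eigenbasis_repr_eq_zero_of_mem_spectralSpan hv hi]
  · exact mul_neg_of_neg_of_pos hjneg (by positivity)

lemma finrank_le_of_isNegDefOn {V : Submodule 𝕜 (ι → 𝕜)} (hV : M.IsNegDefOn V) :
    finrank 𝕜 V ≤ Nat.card {i // hM.eigenvalues i < 0} := by
  have hdisj : Disjoint V (hM.spectralSpan {i | hM.eigenvalues i < 0}ᶜ) :=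
    Submodule.disjoint_def.2 fun v hvV hvP => by
      by_contra hv0
      exact (hV v hvV hv0).not_ge (hM.star_dotProduct_mulVec_nonneg_of_mem_spectralSpan hvP)
  have hdim := Submodule.finrank_add_finrank_le_of_disjoint hdisj
  have hcard := Set.ncard_add_ncard_compl {i | hM.eigenvalues i < 0}
  rw [hM.finrank_spectralSpan, finrank_pi, Nat.card_coe_set_eq] at hdim
  rw [Nat.card_eq_fintype_card] at hcard
  change _ ≤ Set.ncard {i | hM.eigenvalues i < 0}
  omega

end Matrix.IsHermitian

lemma Matrix.IsHermitian.star_dotProduct_mulVec_add_of_mulVec_eq_zero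
    {C : Matrix ι ι 𝕜} (hC : C.IsHermitian) (w : ι → 𝕜) {y : ι → 𝕜} (hy : C *ᵥ y = 0) :
    star (w + y) ⬝ᵥ C *ᵥ (w + y) = star w ⬝ᵥ C *ᵥ w := by
  have hyC : star y ᵥ* C = 0 := by
    rw [← hC.eq, ← star_mulVec, hy, star_zero]
  rw [mulVec_add, hy, add_zero, star_add, add_dotProduct, dotProduct_mulVec (star y), hyC,
    zero_dotProduct, add_zero]

lemma Matrix.IsNegDefOn.sup_span_singleton {A B : Matrix ι ι 𝕜} (hA : A.PosSemidef)
    (hB : B.IsHermitian) {W : Submodule 𝕜 (ι → 𝕜)} (hW : (A + B).IsNegDefOn W) {x : ι → 𝕜}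
    (hx : (A + B) *ᵥ x = 0) (hAx : A *ᵥ x ≠ 0) : B.IsNegDefOn (W ⊔ span 𝕜 {x}) := by
  intro v hv hv0
  obtain ⟨w, hw, _, hcx, rfl⟩ := Submodule.mem_sup.1 hv
  obtain ⟨c, rfl⟩ := Submodule.mem_span_singleton.1 hcx
  have hform : star (w + c • x) ⬝ᵥ B *ᵥ (w + c • x)
      = star w ⬝ᵥ (A + B) *ᵥ w - star (w + c • x) ⬝ᵥ A *ᵥ (w + c • x) := by
    rw [← (hA.1.add hB).star_dotProduct_mulVec_add_of_mulVec_eq_zero w (y := c • x)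
      (by rw [mulVec_smul, hx, smul_zero]), add_mulVec, dotProduct_add, add_sub_cancel_left]
  rw [hform]
  by_cases hw0 : w = 0
  · subst hw0
    have hc : c ≠ 0 := by rintro rfl; simp at hv0
    have hApos : 0 < star (0 + c • x) ⬝ᵥ A *ᵥ (0 + c • x) := by
      refine (hA.dotProduct_mulVec_nonneg _).lt_of_ne' fun h => hAx ?_
      simpa [mulVec_smul, hc] using (hA.dotProduct_mulVec_zero_iff _).1 h
    simpa using hApos
  · exact sub_neg_of_lt ((hW w hw hw0).trans_le (hA.dotProduct_mulVec_nonneg _))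

end

/-- If `A` is positive semidefinite, `B` is Hermitian, and `A + B` has the same number of
negative eigenvalues as `B`, then `ker (A + B) ⊆ ker A`. -/
theorem stmt0 {n : ℕ} (A B : Matrix (Fin n) (Fin n) ℂ)
    (hA : A.PosSemidef) (hB : B.IsHermitian)
    (hcount : negEigCount (hA.1.add hB) = negEigCount hB) :
    ∀ x : Fin n → ℂ, (A + B) *ᵥ x = 0 → A *ᵥ x = 0 := by
  intro x hx
  by_contra hAx
  have hC := hA.1.add hB
  set W := hC.spectralSpan {i | hC.eigenvalues i < 0}
  have hxW : x ∉ W := fun hxW =>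
    (hC.isNegDefOn_spectralSpan x hxW (by rintro rfl; simp at hAx)).ne (by simp [hx])
  have hdim := hB.finrank_le_of_isNegDefOn
    (hC.isNegDefOn_spectralSpan.sup_span_singleton hA hB hx hAx)
  rw [finrank_sup_span_singleton hxW, hC.finrank_spectralSpan] at hdim
  have hcard : negEigCount hC + 1 ≤ negEigCount hB := hdim
  omega
end

section
/- Let X, P ∈ ℂ^{n×n} be Hermitian matrices satisfying XPX = X and PXP = P. Then X and P have the same number of negative eigenvalues (counted with multiplicity) and the same rank. -/
/-!
Call `F : Matrix n k ℂ` a negative compression of a Hermitian `A` when `-(Fᴴ * A * F)` is positive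
definite. The largest `k` admitting one is `ν₋(A)`: the columns of the eigenvector unitary with
negative eigenvalues give one, and for any other the negative eigen-coordinates of `F y` cannot all
vanish for `y ≠ 0`, which embeds `ℂᵏ` into `ℂ^ν₋(A)`. If `F` is a negative compression of `X`, then
`X * F` is one of `P`, since `(X F)ᴴ P (X F) = Fᴴ (X P X) F = Fᴴ X F`; hence `ν₋(X) ≤ ν₋(P)`, and
symmetrically. For the rank, `rank X = rank (X P X) ≤ rank P`, and symmetrically.
-/

open Matrix

open scoped ComplexOrder

namespace Matrix

theorem rank_le_of_mul_mul_eq {m n R : Type*} [Fintype m] [Fintype n] [CommSemiring R]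
    [StrongRankCondition R] {A : Matrix m n R} {B : Matrix n m R} (h : A * B * A = A) :
    A.rank ≤ B.rank :=
  calc A.rank = (A * B * A).rank := by rw [h]
    _ ≤ (A * B).rank := rank_mul_le_left _ _
    _ ≤ B.rank := rank_mul_le_right _ _

variable {𝕜 : Type*} [RCLike 𝕜] {n k : Type*} [Fintype n] [Fintype k] [DecidableEq n]

lemma re_star_dotProduct_diagonal_mulVec (d : n → ℝ) (z : n → 𝕜) :
    RCLike.re (star z ⬝ᵥ (diagonal (fun i ↦ (d i : 𝕜)) *ᵥ z)) = ∑ i, d i * ‖z i‖ ^ 2 := by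
  simp only [dotProduct, mulVec_diagonal, Pi.star_apply, map_sum]
  refine Finset.sum_congr rfl fun i _ ↦ ?_
  rw [mul_left_comm, RCLike.star_def, RCLike.conj_mul]
  norm_cast

lemma star_dotProduct_conjTranspose_mul_mul_mulVec {m : Type*} [Fintype m] (G : Matrix m k 𝕜)
    (A : Matrix m m 𝕜) (y : k → 𝕜) :
    star y ⬝ᵥ ((Gᴴ * A * G) *ᵥ y) = star (G *ᵥ y) ⬝ᵥ (A *ᵥ (G *ᵥ y)) := by
  simp only [star_mulVec, dotProduct_mulVec, vecMul_vecMul]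

lemma card_le_card_neg_of_posDef_neg_diagonal {d : n → ℝ} {G : Matrix n k 𝕜}
    (hG : (-(Gᴴ * diagonal (fun i ↦ (d i : 𝕜)) * G)).PosDef) :
    Fintype.card k ≤ Fintype.card {i // d i < 0} := by
  -- if the rows of `G` with `d i < 0` all kill `y`, the form `∑ dᵢ ‖(G y)ᵢ‖²` at `y` is `≥ 0`
  let L := (G.submatrix (Subtype.val : {i // d i < 0} → n) id).mulVecLin
  have hL : Function.Injective L := by
    refine (injective_iff_map_eq_zero L).2 fun y hy ↦ ?_
    by_contra hy0
    have hpos := hG.re_dotProduct_pos hy0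
    have hvanish : ∀ i, d i < 0 → (G *ᵥ y) i = 0 := fun i hi ↦ congrFun hy ⟨i, hi⟩
    rw [neg_mulVec, dotProduct_neg, map_neg, star_dotProduct_conjTranspose_mul_mul_mulVec,
      re_star_dotProduct_diagonal_mulVec, neg_pos] at hpos
    refine hpos.not_ge (Finset.sum_nonneg fun i _ ↦ ?_)
    by_cases hi : d i < 0
    · simp [hvanish i hi]
    · exact mul_nonneg (not_lt.1 hi) (sq_nonneg _)
  simpa only [Module.finrank_fintype_fun_eq_card] using
    LinearMap.finrank_le_finrank_of_injective hL

namespace IsHermitian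

variable {A : Matrix n n 𝕜} (hA : A.IsHermitian)
include hA

lemma conjTranspose_mul_mul_eq_eigenvectorUnitary_diagonal {m : Type*} [Fintype m]
    (F : Matrix n m 𝕜) :
    Fᴴ * A * F = (star (hA.eigenvectorUnitary : Matrix n n 𝕜) * F)ᴴ *
      diagonal (fun i ↦ (hA.eigenvalues i : 𝕜)) *
        (star (hA.eigenvectorUnitary : Matrix n n 𝕜) * F) := by
  conv_lhs => rw [hA.spectral_theorem, Unitary.conjStarAlgAut_apply]
  simp only [conjTranspose_mul, star_eq_conjTranspose, conjTranspose_conjTranspose,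
    Matrix.mul_assoc, Function.comp_def]

lemma card_le_card_neg_eigenvalues {F : Matrix n k 𝕜} (hF : (-(Fᴴ * A * F)).PosDef) :
    Fintype.card k ≤ Fintype.card {i // hA.eigenvalues i < 0} :=
  card_le_card_neg_of_posDef_neg_diagonal
    (hA.conjTranspose_mul_mul_eq_eigenvectorUnitary_diagonal F ▸ hF)

lemma exists_posDef_neg_conjTranspose_mul_mul :
    ∃ F : Matrix n {i // hA.eigenvalues i < 0} 𝕜, (-(Fᴴ * A * F)).PosDef := by
  let U : Matrix n n 𝕜 := hA.eigenvectorUnitary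
  have hdiag : Uᴴ * A * U = diagonal (fun i ↦ (hA.eigenvalues i : 𝕜)) := by
    simpa [U, star_eq_conjTranspose, Function.comp_def] using
      hA.conjStarAlgAut_star_eigenvectorUnitary
  have hcompress : (U.submatrix id Subtype.val)ᴴ * A * U.submatrix id Subtype.val =
      diagonal (fun i : {i // hA.eigenvalues i < 0} ↦ (hA.eigenvalues i : 𝕜)) := by
    rw [conjTranspose_submatrix]
    calc _ = (Uᴴ * A * U).submatrix Subtype.val Subtype.val := by
          rw [submatrix_mul _ _ _ id _ Function.bijective_id,
            submatrix_mul _ _ _ id _ Function.bijective_id, submatrix_id_id]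
      _ = _ := by
          rw [hdiag]
          exact submatrix_diagonal_embedding _ (Function.Embedding.subtype _)
  refine ⟨U.submatrix id Subtype.val, ?_⟩
  rw [hcompress, diagonal_neg, posDef_diagonal_iff]
  intro i
  simpa using i.2

lemma card_neg_eigenvalues_le_of_mul_mul_eq {B : Matrix n n 𝕜} (hB : B.IsHermitian)
    (h : A * B * A = A) :
    Fintype.card {i // hA.eigenvalues i < 0} ≤ Fintype.card {i // hB.eigenvalues i < 0} := by
  obtain ⟨F, hF⟩ := hA.exists_posDef_neg_conjTranspose_mul_mul
  have hcompress : (A * F)ᴴ * B * (A * F) = Fᴴ * A * F := by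
    rw [conjTranspose_mul, hA.eq]
    calc _ = Fᴴ * (A * B * A) * F := by simp only [Matrix.mul_assoc]
      _ = _ := by rw [h]
  exact hB.card_le_card_neg_eigenvalues (hcompress ▸ hF)

end IsHermitian

end Matrix

/-- If `X`, `P` are Hermitian with `XPX = X` and `PXP = P`, then they have the same number of
negative eigenvalues and the same rank. -/
theorem stmt1 {n : ℕ} (X P : Matrix (Fin n) (Fin n) ℂ)
    (hX : X.IsHermitian) (hP : P.IsHermitian)
    (h1 : X * P * X = X) (h2 : P * X * P = P) :
    negEigCount hX = negEigCount hP ∧ X.rank = P.rank := by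
  simp only [negEigCount, Nat.card_eq_fintype_card]
  exact ⟨(hX.card_neg_eigenvalues_le_of_mul_mul_eq hP h1).antisymm
      (hP.card_neg_eigenvalues_le_of_mul_mul_eq hX h2),
    (rank_le_of_mul_mul_eq h1).antisymm (rank_le_of_mul_mul_eq h2)⟩
end

section
/- Let X, P ∈ ℂ^{n×n} be Hermitian matrices satisfying XPX = X and rank X = rank P. Then ℂⁿ is the direct sum of ker P and the range of X, i.e., ker P ∩ rng X = {0} and dim ker P + dim rng X = n. -/
open Matrix

/-- If `X`, `P` are Hermitian with `XPX = X` and `rank X = rank P`, then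
`ℂⁿ = ker P ∔ rng X`. -/
theorem stmt2 {n : ℕ} (X P : Matrix (Fin n) (Fin n) ℂ)
    (hX : X.IsHermitian) (hP : P.IsHermitian)
    (h1 : X * P * X = X) (hrank : X.rank = P.rank) :
    LinearMap.ker P.mulVecLin ⊓ LinearMap.range X.mulVecLin = ⊥ ∧
    Module.finrank ℂ (LinearMap.ker P.mulVecLin) +
      Module.finrank ℂ (LinearMap.range X.mulVecLin) = n := by
  constructor
  · rw [eq_bot_iff]
    rintro v ⟨hker, w, rfl⟩
    simp only [Submodule.mem_bot]
    have : (X * P * X).mulVecLin w = 0 := by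
      simp only [mulVecLin_mul, LinearMap.comp_apply]
      rw [hker, map_zero]
    rwa [h1] at this
  · have h2 := LinearMap.finrank_range_add_finrank_ker P.mulVecLin
    have h3 : X.rank = Module.finrank ℂ (LinearMap.range X.mulVecLin) := rfl
    have h4 : P.rank = Module.finrank ℂ (LinearMap.range P.mulVecLin) := rfl
    simp only [Module.finrank_fin_fun] at h2
    omega
end

section
/- Let M, N, P ∈ ℂ^{n×n} with P Hermitian, C ∈ ℂ^{m×n}, and let j be an m×m signature matrix (j = j* = j⁻¹). Suppose M* P M − N* P N = C* j C. Define F(λ) = C (M − λN)⁻¹ for λ with det(M − λN) ≠ 0. Then for every μ on the unit circle with det(M − μN) ≠ 0 and every v, w ∈ ker P, one has w* F(μ)* j F(μ) v = 0; that is, F(μ)(ker P) is a j-neutral subspace of ℂᵐ. -/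
open Matrix

lemma herm_dot {n : ℕ} {P : Matrix (Fin n) (Fin n) ℂ} (hP : P.IsHermitian)
    (a b : Fin n → ℂ) : star a ⬝ᵥ (P *ᵥ b) = star (P *ᵥ a) ⬝ᵥ b := by
  rw [Matrix.star_mulVec, hP.eq, Matrix.dotProduct_mulVec]

/-- If `P` is a Hermitian solution of `Mᴴ P M - Nᴴ P N = Cᴴ j C` with `j` a signature matrix,
then for `μ` on the unit circle with `M - μN` invertible, `F(μ)(ker P)` is `j`-neutral, where
`F(μ) = C (M - μN)⁻¹`. -/
theorem stmt4 {n m : ℕ} (M N P : Matrix (Fin n) (Fin n) ℂ)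
    (C : Matrix (Fin m) (Fin n) ℂ) (j : Matrix (Fin m) (Fin m) ℂ)
    (hP : P.IsHermitian) (hj : j.IsHermitian) (hj2 : j * j = 1)
    (hLS : Mᴴ * P * M - Nᴴ * P * N = Cᴴ * j * C)
    (μ : ℂ) (hμ : μ * (starRingEnd ℂ) μ = 1) (hdet : IsUnit (M - μ • N).det)
    (v w : Fin n → ℂ) (hv : P *ᵥ v = 0) (hw : P *ᵥ w = 0) :
    star ((C * (M - μ • N)⁻¹) *ᵥ w) ⬝ᵥ (j *ᵥ ((C * (M - μ • N)⁻¹) *ᵥ v)) = 0 := by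
  set x : Fin n → ℂ := (M - μ • N)⁻¹ *ᵥ v with hx
  set y : Fin n → ℂ := (M - μ • N)⁻¹ *ᵥ w with hy
  have hxy : ∀ u : Fin n → ℂ, (M - μ • N) *ᵥ ((M - μ • N)⁻¹ *ᵥ u) = u := by
    intro u
    rw [Matrix.mulVec_mulVec, Matrix.mul_nonsing_inv _ hdet, Matrix.one_mulVec]
  have key : ∀ u : Fin n → ℂ, P *ᵥ u = 0 →
      P *ᵥ (M *ᵥ ((M - μ • N)⁻¹ *ᵥ u)) = μ • (P *ᵥ (N *ᵥ ((M - μ • N)⁻¹ *ᵥ u))) := by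
    intro u hu
    have h1 : P *ᵥ ((M - μ • N) *ᵥ ((M - μ • N)⁻¹ *ᵥ u)) = 0 := by rw [hxy u, hu]
    have h2 : (M - μ • N) *ᵥ ((M - μ • N)⁻¹ *ᵥ u) =
        M *ᵥ ((M - μ • N)⁻¹ *ᵥ u) - μ • (N *ᵥ ((M - μ • N)⁻¹ *ᵥ u)) := by
      rw [Matrix.sub_mulVec, Matrix.smul_mulVec]
    rw [h2, Matrix.mulVec_sub, sub_eq_zero, Matrix.mulVec_smul] at h1
    exact h1
  have kx := key v hv
  have ky := key w hw
  rw [← Matrix.mulVec_mulVec, ← Matrix.mulVec_mulVec, ← hx, ← hy]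
  have : star (C *ᵥ y) ⬝ᵥ (j *ᵥ (C *ᵥ x)) = star y ⬝ᵥ ((Cᴴ * j * C) *ᵥ x) := by
    simp only [Matrix.star_mulVec, Matrix.dotProduct_mulVec, Matrix.vecMul_vecMul,
      Matrix.mulVec_mulVec, Matrix.mul_assoc]
  rw [this, ← hLS, Matrix.sub_mulVec, dotProduct_sub, sub_eq_zero]
  have hM : (Mᴴ * P * M) *ᵥ x = Mᴴ *ᵥ (P *ᵥ (M *ᵥ x)) := by
    simp only [← Matrix.mulVec_mulVec]
  have hN : (Nᴴ * P * N) *ᵥ x = Nᴴ *ᵥ (P *ᵥ (N *ᵥ x)) := by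
    simp only [← Matrix.mulVec_mulVec]
  have hsM : star y ⬝ᵥ (Mᴴ *ᵥ (P *ᵥ (M *ᵥ x))) = star (M *ᵥ y) ⬝ᵥ (P *ᵥ (M *ᵥ x)) := by
    simp only [Matrix.dotProduct_mulVec, Matrix.star_mulVec, Matrix.vecMul_vecMul,
      Matrix.mulVec_mulVec]
  have hsN : star y ⬝ᵥ (Nᴴ *ᵥ (P *ᵥ (N *ᵥ x))) = star (N *ᵥ y) ⬝ᵥ (P *ᵥ (N *ᵥ x)) := by
    simp only [Matrix.dotProduct_mulVec, Matrix.star_mulVec, Matrix.vecMul_vecMul,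
      Matrix.mulVec_mulVec]
  rw [hM, hN, hsM, hsN, kx]
  rw [show star (M *ᵥ y) ⬝ᵥ (μ • (P *ᵥ (N *ᵥ x)))
      = μ * (star (M *ᵥ y) ⬝ᵥ (P *ᵥ (N *ᵥ x))) from dotProduct_smul μ _ _]
  rw [herm_dot hP (M *ᵥ y) (N *ᵥ x), ky, star_smul, smul_dotProduct,
    ← herm_dot hP (N *ᵥ y) (N *ᵥ x)]
  simp only [smul_eq_mul, ← mul_assoc]
  rw [show μ * star μ = 1 from hμ, one_mul]
end

section
/- Let M = diag(A₁, I_{n₂}) and N = diag(I_{n₁}, A₂) with σ(A₁) ⊂ 𝔻 and σ(A₂) ⊂ 𝔻, let P, X ∈ ℂ^{n×n} be Hermitian with XPX = X, PXP = P, and suppose the range of X is invariant under both M and N. Then, writing X in block form conformal with the decomposition ℂⁿ = ℂ^{n₁} ⊕ ℂ^{n₂}, the range of X decomposes as the direct sum of rng X ∩ (ℂ^{n₁} ⊕ {0}) and rng X ∩ ({0} ⊕ ℂ^{n₂}). -/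
/-!
Since `1 ∉ σ(A₁)`, the matrix `B = 1 - M = diag(1 - A₁, 0)` maps `ℂⁿ` into `ℂ^{n₁} ⊕ 0`, is
injective there, and has kernel `0 ⊕ ℂ^{n₂}`; it also leaves `V = rng X` invariant. Hence `B` is
injective, so surjective, on the finite-dimensional space `V ∩ (ℂ^{n₁} ⊕ 0)`: for `x ∈ V` pick
`y` there with `B y = B x`; then `x = y + (x - y)` with `x - y ∈ V ∩ ker B = V ∩ (0 ⊕ ℂ^{n₂})`.
-/

open Matrix

namespace Submodule

variable {K E : Type*} [DivisionRing K] [AddCommGroup E] [Module K E] [FiniteDimensional K E]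

theorem eq_inf_sup_inf_ker_of_range_le {f : E →ₗ[K] E} {V W : Submodule K E}
    (hV : ∀ x ∈ V, f x ∈ V) (hfW : LinearMap.range f ≤ W) (hW : Disjoint W (LinearMap.ker f)) :
    V = V ⊓ W ⊔ V ⊓ LinearMap.ker f := by
  refine le_antisymm (fun x hx => ?_) (sup_le inf_le_left inf_le_left)
  have hVW : ∀ y ∈ V ⊓ W, f y ∈ V ⊓ W := fun y hy => ⟨hV y hy.1, hfW ⟨y, rfl⟩⟩
  have hinj : Set.InjOn f (V ⊓ W : Submodule K E) := fun y hy z hz hyz =>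
    sub_eq_zero.mp <| (disjoint_def.mp hW) _ (sub_mem hy.2 hz.2) (by simp [hyz])
  obtain ⟨y, hy, hfy⟩ := (LinearMap.injOn_iff_surjOn hVW).mp hinj ⟨hV x hx, hfW ⟨x, rfl⟩⟩
  refine mem_sup.mpr ⟨y, hy, x - y, ⟨sub_mem hx hy.1, ?_⟩, add_sub_cancel y x⟩
  simp [hfy]

end Submodule

section Blocks

variable {K n₁ n₂ : Type*} [Field K]

theorem disjoint_ker_funLeft_inr_inl :
    Disjoint (LinearMap.ker (LinearMap.funLeft K K (Sum.inr : n₂ → n₁ ⊕ n₂)))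
      (LinearMap.ker (LinearMap.funLeft K K (Sum.inl : n₁ → n₁ ⊕ n₂))) := by
  refine Submodule.disjoint_def.mpr fun x hr hl => funext fun i => ?_
  rcases i with i | i
  · exact congrFun hl i
  · exact congrFun hr i

variable [Fintype n₁] [Fintype n₂] [DecidableEq n₁] [DecidableEq n₂] (A : Matrix n₁ n₁ K)

theorem one_sub_fromBlocks_one_mulVec (x : n₁ ⊕ n₂ → K) :
    (1 - fromBlocks A 0 0 (1 : Matrix n₂ n₂ K)) *ᵥ x = Sum.elim ((1 - A) *ᵥ (x ∘ Sum.inl)) 0 := by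
  rw [← fromBlocks_one, sub_eq_add_neg, fromBlocks_neg, fromBlocks_add, fromBlocks_mulVec]
  simp [sub_eq_add_neg]

theorem range_mulVecLin_one_sub_fromBlocks_one_le :
    LinearMap.range (1 - fromBlocks A 0 0 (1 : Matrix n₂ n₂ K)).mulVecLin ≤
      LinearMap.ker (LinearMap.funLeft K K (Sum.inr : n₂ → n₁ ⊕ n₂)) := by
  rintro _ ⟨x, rfl⟩
  ext i
  simp only [mulVecLin_apply, LinearMap.funLeft_apply, one_sub_fromBlocks_one_mulVec]
  rfl

theorem ker_mulVecLin_one_sub_fromBlocks_one {A : Matrix n₁ n₁ K} (hA : IsUnit (1 - A)) :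
    LinearMap.ker (1 - fromBlocks A 0 0 (1 : Matrix n₂ n₂ K)).mulVecLin =
      LinearMap.ker (LinearMap.funLeft K K (Sum.inl : n₁ → n₁ ⊕ n₂)) := by
  ext x
  simp only [LinearMap.mem_ker, mulVecLin_apply, one_sub_fromBlocks_one_mulVec]
  rw [← Sum.elim_zero_zero, Sum.elim_eq_iff, and_iff_left rfl]
  exact (mulVec_injective_iff_isUnit.mpr hA).eq_iff' (mulVec_zero _)

end Blocks

theorem stmt6_general {n₁ n₂ : ℕ}
    (A₁ : Matrix (Fin n₁) (Fin n₁) ℂ)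
    (hA₁ : ∀ z ∈ spectrum ℂ A₁, ‖z‖ < 1)
    (X : Matrix (Fin n₁ ⊕ Fin n₂) (Fin n₁ ⊕ Fin n₂) ℂ)
    (hMinv : ∀ x ∈ LinearMap.range X.mulVecLin,
      (Matrix.fromBlocks A₁ 0 0 (1 : Matrix (Fin n₂) (Fin n₂) ℂ)) *ᵥ x ∈
        LinearMap.range X.mulVecLin) :
    LinearMap.range X.mulVecLin =
      (LinearMap.range X.mulVecLin ⊓
        LinearMap.ker (LinearMap.funLeft ℂ ℂ (Sum.inr : Fin n₂ → Fin n₁ ⊕ Fin n₂))) ⊔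
      (LinearMap.range X.mulVecLin ⊓
        LinearMap.ker (LinearMap.funLeft ℂ ℂ (Sum.inl : Fin n₁ → Fin n₁ ⊕ Fin n₂))) ∧
    (LinearMap.range X.mulVecLin ⊓
        LinearMap.ker (LinearMap.funLeft ℂ ℂ (Sum.inr : Fin n₂ → Fin n₁ ⊕ Fin n₂))) ⊓
      (LinearMap.range X.mulVecLin ⊓
        LinearMap.ker (LinearMap.funLeft ℂ ℂ (Sum.inl : Fin n₁ → Fin n₁ ⊕ Fin n₂))) = ⊥ := by
  set V := LinearMap.range X.mulVecLin
  set B := 1 - fromBlocks A₁ 0 0 (1 : Matrix (Fin n₂) (Fin n₂) ℂ)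
  have hunit : IsUnit (1 - A₁) := by
    have hone : (1 : ℂ) ∉ spectrum ℂ A₁ := fun h => by simpa using hA₁ 1 h
    simpa using spectrum.notMem_iff.mp hone
  have hBinv : ∀ x ∈ V, B.mulVecLin x ∈ V := fun x hx => by
    simpa [B, sub_mulVec] using sub_mem hx (hMinv x hx)
  have hker := ker_mulVecLin_one_sub_fromBlocks_one (n₂ := Fin n₂) hunit
  refine ⟨?_, disjoint_iff.mp (disjoint_ker_funLeft_inr_inl.mono inf_le_right inf_le_right)⟩
  rw [← hker]
  exact Submodule.eq_inf_sup_inf_ker_of_range_le hBinv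
    (range_mulVecLin_one_sub_fromBlocks_one_le A₁) (hker ▸ disjoint_ker_funLeft_inr_inl)

/-- If `XPX = X`, `PXP = P`, `σ(A₁), σ(A₂) ⊂ 𝔻` and `rng X` is invariant under
`M = diag(A₁, I)` and `N = diag(I, A₂)`, then `rng X` is the direct sum of
`rng X ∩ (ℂ^{n₁} ⊕ 0)` and `rng X ∩ (0 ⊕ ℂ^{n₂})`. -/
theorem stmt6 {n₁ n₂ : ℕ}
    (A₁ : Matrix (Fin n₁) (Fin n₁) ℂ) (A₂ : Matrix (Fin n₂) (Fin n₂) ℂ)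
    (hA₁ : ∀ z ∈ spectrum ℂ A₁, ‖z‖ < 1) (hA₂ : ∀ z ∈ spectrum ℂ A₂, ‖z‖ < 1)
    (P X : Matrix (Fin n₁ ⊕ Fin n₂) (Fin n₁ ⊕ Fin n₂) ℂ)
    (hP : P.IsHermitian) (hX : X.IsHermitian)
    (h1 : X * P * X = X) (h2 : P * X * P = P)
    (hMinv : ∀ x ∈ LinearMap.range X.mulVecLin,
      (Matrix.fromBlocks A₁ 0 0 (1 : Matrix (Fin n₂) (Fin n₂) ℂ)) *ᵥ x ∈
        LinearMap.range X.mulVecLin)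
    (hNinv : ∀ x ∈ LinearMap.range X.mulVecLin,
      (Matrix.fromBlocks (1 : Matrix (Fin n₁) (Fin n₁) ℂ) 0 0 A₂) *ᵥ x ∈
        LinearMap.range X.mulVecLin) :
    LinearMap.range X.mulVecLin =
      (LinearMap.range X.mulVecLin ⊓
        LinearMap.ker (LinearMap.funLeft ℂ ℂ (Sum.inr : Fin n₂ → Fin n₁ ⊕ Fin n₂))) ⊔
      (LinearMap.range X.mulVecLin ⊓
        LinearMap.ker (LinearMap.funLeft ℂ ℂ (Sum.inl : Fin n₁ → Fin n₁ ⊕ Fin n₂))) ∧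
    (LinearMap.range X.mulVecLin ⊓
        LinearMap.ker (LinearMap.funLeft ℂ ℂ (Sum.inr : Fin n₂ → Fin n₁ ⊕ Fin n₂))) ⊓
      (LinearMap.range X.mulVecLin ⊓
        LinearMap.ker (LinearMap.funLeft ℂ ℂ (Sum.inl : Fin n₁ → Fin n₁ ⊕ Fin n₂))) = ⊥ :=
  stmt6_general A₁ hA₁ X hMinv
end

section
/- Let A₁ ∈ ℂ^{n₁×n₁} have all eigenvalues in the open right half-plane, C₂₁ ∈ ℂ^{q×n₁}, (C₂₁, A₁) observable, and let Q₁ be the (negative definite) solution of A₁* Q₁ + Q₁ A₁ + C₂₁* C₂₁ = 0. Then the matrix function b(λ) = I_q + C₂₁ Q₁⁻¹ (A₁* + λ I)⁻¹ C₂₁* satisfies b(iμ) b(iμ)* = I_q for all real μ (i.e., b takes unitary values on the imaginary axis). -/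
open Matrix
open scoped ComplexOrder

/-- If all eigenvalues of `A₁` lie in the open right half-plane, `(C₂₁, A₁)` is observable, and
`Q₁` is the negative definite solution of `A₁ᴴ Q₁ + Q₁ A₁ + C₂₁ᴴ C₂₁ = 0`, then
`b(λ) = I + C₂₁ Q₁⁻¹ (A₁ᴴ + λI)⁻¹ C₂₁ᴴ` takes unitary values on the imaginary axis:
`b(iμ) b(iμ)ᴴ = I` for all real `μ`. -/
theorem stmt11 {n₁ q : ℕ} (A₁ : Matrix (Fin n₁) (Fin n₁) ℂ)
    (C₂₁ : Matrix (Fin q) (Fin n₁) ℂ)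
    (hA : ∀ z ∈ spectrum ℂ A₁, 0 < z.re)
    (hobs : ∀ v : Fin n₁ → ℂ, (∀ j : ℕ, C₂₁ *ᵥ (A₁ ^ j *ᵥ v) = 0) → v = 0)
    (Q₁ : Matrix (Fin n₁) (Fin n₁) ℂ) (hQ : (-Q₁).PosDef)
    (hLyap : A₁ᴴ * Q₁ + Q₁ * A₁ + C₂₁ᴴ * C₂₁ = 0) :
    ∀ μ : ℝ,
      (1 + C₂₁ * Q₁⁻¹ * (A₁ᴴ + ((μ : ℂ) * Complex.I) • 1)⁻¹ * C₂₁ᴴ) *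
        (1 + C₂₁ * Q₁⁻¹ * (A₁ᴴ + ((μ : ℂ) * Complex.I) • 1)⁻¹ * C₂₁ᴴ)ᴴ = 1 := by
  intro μ
  set l : ℂ := (μ : ℂ) * Complex.I with hl
  set M : Matrix (Fin n₁) (Fin n₁) ℂ := A₁ᴴ + l • 1 with hM
  have hstarl : starRingEnd ℂ l = -l := by
    simp [hl, Complex.ext_iff]
  have hMunit : IsUnit M := by
    have hmem : (-l) ∉ spectrum ℂ (A₁ᴴ) := by
      intro h
      have heq : A₁ᴴ = star A₁ := rfl
      rw [heq, spectrum.map_star] at h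
      have h2 : star (-l) ∈ spectrum ℂ A₁ := h
      have h3 : star (-l) = l := by
        show -(starRingEnd ℂ l) = l
        rw [hstarl]; ring
      rw [h3] at h2
      have := hA l h2
      simp [hl] at this
    rw [spectrum.notMem_iff] at hmem
    have heq2 : (algebraMap ℂ (Matrix (Fin n₁) (Fin n₁) ℂ)) (-l) - A₁ᴴ = -M := by
      rw [Algebra.algebraMap_eq_smul_one, hM]
      module
    rw [heq2] at hmem
    exact (IsUnit.neg_iff M).mp hmem
  have hMd : IsUnit M.det := (isUnit_iff_isUnit_det M).mp hMunit
  have hMHd : IsUnit (Mᴴ).det := (isUnit_iff_isUnit_det _).mp hMunit.star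
  have hQd : IsUnit Q₁.det := by
    have h := hQ.det_pos.ne'
    rw [Matrix.det_neg] at h
    exact isUnit_iff_ne_zero.mpr fun h0 => h (by rw [h0, mul_zero])
  haveI : Invertible M := M.invertibleOfIsUnitDet hMd
  haveI : Invertible (Mᴴ) := (Mᴴ).invertibleOfIsUnitDet hMHd
  haveI : Invertible Q₁ := Q₁.invertibleOfIsUnitDet hQd
  have hQH : Q₁ᴴ = Q₁ := by
    have h := hQ.isHermitian
    have : (-Q₁)ᴴ = -Q₁ := h
    rw [conjTranspose_neg] at this
    exact neg_injective this
  have hstarl' : star l = -l := hstarl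
  have hMH : Mᴴ = A₁ + (-l) • 1 := by
    rw [hM, conjTranspose_add, conjTranspose_smul, conjTranspose_conjTranspose,
      conjTranspose_one, hstarl']
  have hCC : C₂₁ᴴ * C₂₁ = -(M * Q₁ + Q₁ * Mᴴ) := by
    have h1 : A₁ᴴ * Q₁ + Q₁ * A₁ = -(C₂₁ᴴ * C₂₁) := by
      have := hLyap
      linear_combination (norm := noncomm_ring) this
    have h2 : M * Q₁ + Q₁ * Mᴴ = A₁ᴴ * Q₁ + Q₁ * A₁ := by
      rw [hM, hMH]
      simp only [add_mul, mul_add, smul_mul_assoc, mul_smul_comm, one_mul, mul_one]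
      module
    rw [h2, h1, neg_neg]
  set X : Matrix (Fin q) (Fin q) ℂ := C₂₁ * Q₁⁻¹ * M⁻¹ * C₂₁ᴴ with hX
  have hXH : Xᴴ = C₂₁ * (Mᴴ)⁻¹ * Q₁⁻¹ * C₂₁ᴴ := by
    rw [hX]
    simp only [conjTranspose_mul, conjTranspose_conjTranspose, conjTranspose_nonsing_inv, hQH,
      Matrix.mul_assoc]
  have hXY : X * Xᴴ = -(X + Xᴴ) := by
    rw [hXH, hX]
    have h1 : C₂₁ * Q₁⁻¹ * M⁻¹ * C₂₁ᴴ * (C₂₁ * (Mᴴ)⁻¹ * Q₁⁻¹ * C₂₁ᴴ)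
        = C₂₁ * (Q₁⁻¹ * (M⁻¹ * ((C₂₁ᴴ * C₂₁) * ((Mᴴ)⁻¹ * (Q₁⁻¹ * C₂₁ᴴ))))) := by
      simp only [Matrix.mul_assoc]
    rw [h1, hCC]
    simp only [Matrix.neg_mul, Matrix.mul_neg, Matrix.add_mul, Matrix.mul_add, Matrix.mul_assoc]
    rw [Matrix.inv_mul_cancel_left_of_invertible, Matrix.mul_inv_cancel_left_of_invertible,
      Matrix.inv_mul_cancel_left_of_invertible, Matrix.mul_inv_cancel_left_of_invertible]
    abel
  have expand : (1 + X) * (1 + X)ᴴ = 1 + (X + Xᴴ + X * Xᴴ) := by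
    rw [conjTranspose_add, conjTranspose_one]
    noncomm_ring
  rw [expand, hXY]
  abel
end

section
/- Suppose M = diag(A₁, I_{n₂}), N = diag(I_{n₁}, A₂) with σ(A₁) ⊂ 𝔻 and σ(A₂) ⊂ 𝔻, C = [[C₁₁, C₁₂],[C₂₁, C₂₂]], and suppose that for every λ in the open unit disc, rank [M − λN; C₂] = n and rank [λM − N; C₁] = n, where C₁ = [C₁₁ C₁₂] and C₂ = [C₂₁ C₂₂]. Then for every λ ∈ ℂ, ker [M − λN; C] = {0} and ker [λM − N; C] = {0}; in particular the triple (C, M, N) is observable: ∩_{λ : det(M−λN)≠0} ker C(M − λN)⁻¹ = {0}. -/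
open Matrix Filter Topology

/-! For `|λ| < 1` the rank hypotheses say directly that `[M - λN; C]` is injective. On the unit
circle `M - λN = diag(A₁ - λ, 1 - λA₂)` is invertible because both spectra lie in the open disc,
and for `|λ| > 1` one rescales the pencil to the point `λ⁻¹` of the disc, where the other rank
hypothesis applies.

Observability then holds for every regular pencil whose kernel condition holds at every point of
the projective line (including `∞`, i.e. `ker N ∩ ker C = 0`): by the resolvent identity the
unobservable subspace is invariant under `N (M - λ₀N)⁻¹`, and an eigenvector `u` of this operator
gives `w = (M - λ₀N)⁻¹ u` with `C w = 0` and `N w = α (M - λ₀N) w`, so `w` lies in the kernel of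
`N` or of `M - (λ₀ + α⁻¹)N`. -/

section Rank

variable {K m m' n : Type*} [Field K] [Fintype n]

theorem Matrix.mulVec_injective_of_rank_eq_card {A : Matrix m n K}
    (h : A.rank = Fintype.card n) : Function.Injective A.mulVec := by
  have hker : Module.finrank K (LinearMap.ker A.mulVecLin) = 0 := by
    have := LinearMap.finrank_range_add_finrank_ker A.mulVecLin
    rw [Module.finrank_fintype_fun_eq_card] at this
    have hrange : Module.finrank K (LinearMap.range A.mulVecLin) = Fintype.card n := h
    omega
  rw [← Matrix.coe_mulVecLin, ← LinearMap.ker_eq_bot]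
  exact Submodule.finrank_eq_zero.mp hker

theorem Matrix.eq_zero_of_rank_fromRows_eq_card {A : Matrix m n K} {B : Matrix m' n K}
    (h : (fromRows A B).rank = Fintype.card n) {v : n → K} (hA : A *ᵥ v = 0)
    (hB : B *ᵥ v = 0) : v = 0 :=
  mulVec_injective_of_rank_eq_card h <| by
    rw [fromRows_mulVec, hA, hB, mulVec_zero]
    ext (i | i) <;> rfl

end Rank

/-- `ker [A; C] = {0}` for the stacked matrix `[A; C]`. -/
def JointlyInjective {K ι κ : Type*} [Semiring K] [Fintype ι] (A : Matrix ι ι K)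
    (C : Matrix κ ι K) : Prop :=
  ∀ v : ι → K, A *ᵥ v = 0 → C *ᵥ v = 0 → v = 0

section Pencil

variable {K ι κ : Type*} [NormedField K] [Fintype ι] [DecidableEq ι]
  {C : Matrix κ ι K} {M N : Matrix ι ι K}

theorem jointlyInjective_sub_smul
    (hin : ∀ l ∈ Metric.ball (0 : K) 1, JointlyInjective (M - l • N) C)
    (hout : ∀ l ∈ Metric.ball (0 : K) 1, JointlyInjective (l • M - N) C)
    (hcirc : ∀ l : K, ‖l‖ = 1 → IsUnit (M - l • N).det) (l : K) :
    JointlyInjective (M - l • N) C := by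
  intro v hv hC
  rcases lt_trichotomy ‖l‖ 1 with hl | hl | hl
  · exact hin l (mem_ball_zero_iff.mpr hl) v hv hC
  · exact eq_zero_of_mulVec_eq_zero (hcirc l hl).ne_zero hv
  · have hl0 : l ≠ 0 := norm_pos_iff.mp (one_pos.trans hl)
    refine hout l⁻¹ (by simpa using inv_lt_one_of_one_lt₀ hl) v ?_ hC
    have hpencil : l⁻¹ • M - N = l⁻¹ • (M - l • N) := by
      rw [smul_sub, smul_smul, inv_mul_cancel₀ hl0, one_smul]
    rw [hpencil, smul_mulVec, hv, smul_zero]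

theorem jointlyInjective_smul_sub
    (hin : ∀ l ∈ Metric.ball (0 : K) 1, JointlyInjective (M - l • N) C)
    (hout : ∀ l ∈ Metric.ball (0 : K) 1, JointlyInjective (l • M - N) C)
    (hcirc : ∀ l : K, ‖l‖ = 1 → IsUnit (M - l • N).det) (l : K) :
    JointlyInjective (l • M - N) C := by
  rcases eq_or_ne l 0 with rfl | hl0
  · exact hout 0 (Metric.mem_ball_self one_pos)
  intro v hv hC
  refine jointlyInjective_sub_smul hin hout hcirc l⁻¹ v ?_ hC
  have hpencil : M - l⁻¹ • N = l⁻¹ • (l • M - N) := by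
    rw [smul_sub, smul_smul, inv_mul_cancel₀ hl0, one_smul]
  rw [hpencil, smul_mulVec, hv, smul_zero]

end Pencil

section Blocks

variable {K m n : Type*} [Field K] [Fintype m] [DecidableEq m] [Fintype n] [DecidableEq n]

theorem isUnit_det_fromBlocks_sub_smul (A₁ : Matrix m m K) (A₂ : Matrix n n K) {l : K}
    (hl : l ≠ 0) (h₁ : l ∉ spectrum K A₁) (h₂ : l⁻¹ ∉ spectrum K A₂) :
    IsUnit (fromBlocks A₁ 0 0 1 - l • fromBlocks 1 0 0 A₂).det := by
  rw [spectrum.notMem_iff, Algebra.algebraMap_eq_smul_one] at h₁ h₂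
  have hblock₁ : A₁ - l • 1 = -(l • 1 - A₁) := (neg_sub _ _).symm
  have hblock₂ : 1 - l • A₂ = l • (l⁻¹ • 1 - A₂) := by
    rw [smul_sub, smul_smul, mul_inv_cancel₀ hl, one_smul]
  have hpencil : fromBlocks A₁ 0 0 1 - l • fromBlocks 1 0 0 A₂
      = fromBlocks (A₁ - l • 1) 0 0 (1 - l • A₂) := by
    ext (i | i) (j | j) <;> simp
  rw [hpencil, det_fromBlocks_zero₂₁, hblock₁, hblock₂]
  exact ((isUnit_iff_isUnit_det _).mp h₁.neg).mul
    ((isUnit_iff_isUnit_det _).mp (h₂.smul hl.isUnit.unit))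

end Blocks

theorem Submodule.exists_eigenvector_of_mapsTo {K V : Type*} [Field K] [IsAlgClosed K]
    [AddCommGroup V] [Module K V] [FiniteDimensional K V] (f : Module.End K V)
    {W : Submodule K V} (hW : W ≠ ⊥) (hf : ∀ x ∈ W, f x ∈ W) :
    ∃ μ : K, ∃ x ∈ W, x ≠ 0 ∧ f x = μ • x := by
  have : Nontrivial W := Submodule.nontrivial_iff_ne_bot.mpr hW
  obtain ⟨μ, hμ⟩ := Module.End.exists_eigenvalue (f.restrict hf)
  obtain ⟨x, hx⟩ := hμ.exists_hasEigenvector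
  refine ⟨μ, x, x.2, fun h => hx.2 (Subtype.ext h), ?_⟩
  simpa using congrArg Subtype.val hx.apply_eq_smul

section Observability

variable {K ι κ : Type*} [NontriviallyNormedField K] [Fintype ι] [DecidableEq ι]
  (C : Matrix κ ι K) (M N : Matrix ι ι K)

noncomputable def unobservableSubspace : Submodule K (ι → K) :=
  ⨅ (l : K) (_ : IsUnit (M - l • N).det), LinearMap.ker (C * (M - l • N)⁻¹).mulVecLin

variable {C M N}

theorem mem_unobservableSubspace {x : ι → K} :
    x ∈ unobservableSubspace C M N ↔
      ∀ l : K, IsUnit (M - l • N).det → (C * (M - l • N)⁻¹) *ᵥ x = 0 := by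
  simp [unobservableSubspace, Submodule.mem_iInf]

theorem pencil_inv_sub_inv {l l₀ : K} (hl : IsUnit (M - l • N).det)
    (hl₀ : IsUnit (M - l₀ • N).det) :
    (M - l • N)⁻¹ - (M - l₀ • N)⁻¹ = (l - l₀) • ((M - l • N)⁻¹ * N * (M - l₀ • N)⁻¹) := by
  have hdiff : (M - l₀ • N) - (M - l • N) = (l - l₀) • N := by
    rw [sub_sub_sub_cancel_left, ← sub_smul]
  calc (M - l • N)⁻¹ - (M - l₀ • N)⁻¹
      = (M - l • N)⁻¹ * ((M - l₀ • N) - (M - l • N)) * (M - l₀ • N)⁻¹ := by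
        rw [Matrix.mul_sub, Matrix.sub_mul, mul_nonsing_inv_cancel_right _ _ hl₀,
          nonsing_inv_mul _ hl, Matrix.one_mul]
    _ = _ := by rw [hdiff, Matrix.mul_smul, Matrix.smul_mul]

theorem mulVec_pencil_inv_eq_zero_of_forall_ne {y : ι → K} {l₀ : K}
    (hl₀ : IsUnit (M - l₀ • N).det)
    (h : ∀ l ≠ l₀, IsUnit (M - l • N).det → (C * (M - l • N)⁻¹) *ᵥ y = 0) :
    (C * (M - l₀ • N)⁻¹) *ᵥ y = 0 := by
  have hpencil : Continuous fun l : K => M - l • N := by fun_prop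
  have hcont : ContinuousAt (fun l : K => (C * (M - l • N)⁻¹) *ᵥ y) l₀ := by
    have hinv : ContinuousAt (fun l : K => (M - l • N)⁻¹) l₀ :=
      (continuousAt_matrix_inv _ (by
        rw [Ring.inverse_eq_inv']; exact continuousAt_inv₀ hl₀.ne_zero)).comp
        hpencil.continuousAt
    have hmul : Continuous fun X : Matrix ι ι K => (C * X) *ᵥ y :=
      (continuous_const.matrix_mul continuous_id).matrix_mulVec continuous_const
    exact hmul.continuousAt.comp hinv
  have hreg : ∀ᶠ l in 𝓝[≠] l₀, IsUnit (M - l • N).det :=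
    nhdsWithin_le_nhds <| (hpencil.matrix_det.continuousAt.eventually_ne hl₀.ne_zero).mono
      fun l hl => hl.isUnit
  have hzero : ∀ᶠ l in 𝓝[≠] l₀, (C * (M - l • N)⁻¹) *ᵥ y = 0 :=
    (hreg.and self_mem_nhdsWithin).mono fun l hl => h l hl.2 hl.1
  exact tendsto_nhds_unique (hcont.tendsto.mono_left nhdsWithin_le_nhds)
    (tendsto_const_nhds.congr' (hzero.mono fun l hl => hl.symm))

theorem mulVec_mem_unobservableSubspace {l₀ : K}
    (hl₀ : IsUnit (M - l₀ • N).det) {x : ι → K} (hx : x ∈ unobservableSubspace C M N) :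
    (N * (M - l₀ • N)⁻¹) *ᵥ x ∈ unobservableSubspace C M N := by
  rw [mem_unobservableSubspace] at hx ⊢
  have hoff : ∀ l ≠ l₀, IsUnit (M - l • N).det →
      (C * (M - l • N)⁻¹) *ᵥ ((N * (M - l₀ • N)⁻¹) *ᵥ x) = 0 := by
    intro l hne hl
    have hresolvent := pencil_inv_sub_inv hl hl₀
    rw [← inv_smul_eq_iff₀ (sub_ne_zero.mpr hne)] at hresolvent
    rw [mulVec_mulVec, ← Matrix.mul_assoc, Matrix.mul_assoc, Matrix.mul_assoc,
      ← Matrix.mul_assoc _ N, ← hresolvent, Matrix.mul_smul,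
      Matrix.mul_sub, smul_mulVec, sub_mulVec, hx l hl, hx l₀ hl₀, sub_zero, smul_zero]
  intro l hl
  rcases eq_or_ne l l₀ with rfl | hne
  · exact mulVec_pencil_inv_eq_zero_of_forall_ne hl hoff
  · exact hoff l hne hl

variable [IsAlgClosed K]

theorem unobservableSubspace_eq_bot (hreg : ∃ l : K, IsUnit (M - l • N).det)
    (hfin : ∀ l : K, JointlyInjective (M - l • N) C) (hinf : JointlyInjective N C) :
    unobservableSubspace C M N = ⊥ := by
  obtain ⟨l₀, hl₀⟩ := hreg
  by_contra hU
  obtain ⟨α, u, hu, hu0, hTu⟩ := Submodule.exists_eigenvector_of_mapsTo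
    (N * (M - l₀ • N)⁻¹).mulVecLin hU
    fun x hx => mulVec_mem_unobservableSubspace hl₀ hx
  set w := (M - l₀ • N)⁻¹ *ᵥ u
  have hwu : (M - l₀ • N) *ᵥ w = u := by
    rw [mulVec_mulVec, mul_nonsing_inv _ hl₀, one_mulVec]
  have hw0 : w ≠ 0 := fun h => hu0 (by rw [← hwu, h, mulVec_zero])
  have hCw : C *ᵥ w = 0 := by
    rw [mulVec_mulVec]
    exact (mem_unobservableSubspace.mp hu) l₀ hl₀
  have hNw : N *ᵥ w = α • u := by
    rw [mulVec_mulVec]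
    exact hTu
  rcases eq_or_ne α 0 with rfl | hα
  · exact hw0 (hinf w (by rw [hNw, zero_smul]) hCw)
  · refine hw0 (hfin (l₀ + α⁻¹) w ?_ hCw)
    rw [add_smul, ← sub_sub, sub_mulVec, hwu, smul_mulVec, hNw, smul_smul,
      inv_mul_cancel₀ hα, one_smul, sub_self]

end Observability

/-- If `σ(A₁), σ(A₂) ⊂ 𝔻` and the rank conditions `rank [M - λN; C₂] = n`,
`rank [λM - N; C₁] = n` hold for all `λ ∈ 𝔻`, then `ker [M - λN; C] = {0}` and
`ker [λM - N; C] = {0}` for all `λ ∈ ℂ`, and the triple `(C, M, N)` is observable. -/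
theorem stmt12 {n₁ n₂ p q : ℕ}
    (A₁ : Matrix (Fin n₁) (Fin n₁) ℂ) (A₂ : Matrix (Fin n₂) (Fin n₂) ℂ)
    (hA₁ : ∀ z ∈ spectrum ℂ A₁, ‖z‖ < 1) (hA₂ : ∀ z ∈ spectrum ℂ A₂, ‖z‖ < 1)
    (C : Matrix (Fin p ⊕ Fin q) (Fin n₁ ⊕ Fin n₂) ℂ)
    (M N : Matrix (Fin n₁ ⊕ Fin n₂) (Fin n₁ ⊕ Fin n₂) ℂ)
    (hM : M = Matrix.fromBlocks A₁ 0 0 (1 : Matrix (Fin n₂) (Fin n₂) ℂ))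
    (hN : N = Matrix.fromBlocks (1 : Matrix (Fin n₁) (Fin n₁) ℂ) 0 0 A₂)
    (hrank2 : ∀ l ∈ Metric.ball (0 : ℂ) 1,
      (Matrix.fromRows (M - l • N)
        (C.submatrix (Sum.inr : Fin q → Fin p ⊕ Fin q) id)).rank = n₁ + n₂)
    (hrank1 : ∀ l ∈ Metric.ball (0 : ℂ) 1,
      (Matrix.fromRows (l • M - N)
        (C.submatrix (Sum.inl : Fin p → Fin p ⊕ Fin q) id)).rank = n₁ + n₂) :
    (∀ l : ℂ, ∀ v : Fin n₁ ⊕ Fin n₂ → ℂ,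
      (M - l • N) *ᵥ v = 0 → C *ᵥ v = 0 → v = 0) ∧
    (∀ l : ℂ, ∀ v : Fin n₁ ⊕ Fin n₂ → ℂ,
      (l • M - N) *ᵥ v = 0 → C *ᵥ v = 0 → v = 0) ∧
    (∀ v : Fin n₁ ⊕ Fin n₂ → ℂ,
      (∀ l : ℂ, IsUnit (M - l • N).det → (C * (M - l • N)⁻¹) *ᵥ v = 0) → v = 0) := by
  have hcirc : ∀ l : ℂ, ‖l‖ = 1 → IsUnit (M - l • N).det := by
    intro l hl
    rw [hM, hN]
    exact isUnit_det_fromBlocks_sub_smul A₁ A₂ (norm_ne_zero_iff.mp (hl ▸ one_ne_zero))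
      (fun h => (hA₁ l h).ne hl) (fun h => (hA₂ _ h).ne (by rw [norm_inv, hl, inv_one]))
  have hcard : n₁ + n₂ = Fintype.card (Fin n₁ ⊕ Fin n₂) := by simp
  have hin : ∀ l ∈ Metric.ball (0 : ℂ) 1, JointlyInjective (M - l • N) C :=
    fun l hl v hv hC => eq_zero_of_rank_fromRows_eq_card ((hrank2 l hl).trans hcard) hv
      (funext fun i => congrFun hC (Sum.inr i))
  have hout : ∀ l ∈ Metric.ball (0 : ℂ) 1, JointlyInjective (l • M - N) C :=
    fun l hl v hv hC => eq_zero_of_rank_fromRows_eq_card ((hrank1 l hl).trans hcard) hv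
      (funext fun i => congrFun hC (Sum.inl i))
  have hfin := jointlyInjective_sub_smul hin hout hcirc
  have hfin' := jointlyInjective_smul_sub hin hout hcirc
  have hinf : JointlyInjective N C := fun v hv hC =>
    hfin' 0 v (by rw [zero_smul, zero_sub, neg_mulVec, hv, neg_zero]) hC
  refine ⟨hfin, hfin', fun v hv => ?_⟩
  have hU := unobservableSubspace_eq_bot ⟨1, hcirc 1 norm_one⟩ hfin hinf
  rw [← Submodule.mem_bot ℂ, ← hU]
  exact mem_unobservableSubspace.mpr hv
end

section
/- Let W ∈ ℂ(λ)^{m×m} be given by W(λ) = I_m − (1 − λ·conj(μ)) F(λ) X F(μ)* j_{pq}, where F(λ) = C(M − λN)⁻¹, |μ| = 1, det(M − μN) ≠ 0, P is a Hermitian solution of M* P M − N* P N = C* j_{pq} C, X is Hermitian with XPX = X, PXP = P, and rng X is invariant under M and N. Then the kernel identity F(λ) X F(ω)* = (j_{pq} − W(λ) j_{pq} W(ω)*)/(1 − λ·conj(ω)) holds for all λ, ω with det(M − λN) ≠ 0 and det(M − ωN) ≠ 0. -/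
open Matrix

lemma factor_of_range_le {n : ℕ} (X A : Matrix (Fin n) (Fin n) ℂ)
    (h : LinearMap.range A.mulVecLin ≤ LinearMap.range X.mulVecLin) :
    ∃ G, A = X * G := by
  have hc : ∀ j, ∃ g : Fin n → ℂ, X.mulVec g = A.mulVec (Pi.single j 1) := by
    intro j
    obtain ⟨g, hg⟩ := h (LinearMap.mem_range_self A.mulVecLin (Pi.single j 1))
    exact ⟨g, hg⟩
  choose g hg using hc
  refine ⟨Matrix.of fun i j => g j i, ?_⟩
  ext i j
  have := congrFun (hg j) i
  simp only [mulVec, dotProduct] at this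
  simp only [Matrix.mul_apply, Matrix.of_apply]
  rw [this]
  simp [Pi.single_apply, mul_ite]

lemma inv_factor {n : ℕ} (T X : Matrix (Fin n) (Fin n) ℂ) (hT : IsUnit T.det)
    (B : Matrix (Fin n) (Fin n) ℂ) (hB : T * X = X * B) :
    ∃ G, T⁻¹ * X = X * G := by
  set R := LinearMap.range X.mulVecLin with hR
  have hTe := T.invertibleOfIsUnitDet hT
  let e := T.toLinearEquiv' hTe
  have he : T.mulVecLin = (e : (Fin n → ℂ) →ₗ[ℂ] (Fin n → ℂ)) := by
    ext v
    simp [e, Matrix.toLinearEquiv', Matrix.toLin'_apply]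
  have h1 : LinearMap.range (T * X).mulVecLin ≤ R := by
    rw [hB, Matrix.mulVecLin_mul]
    exact LinearMap.range_comp_le_range _ _
  have hmap : Submodule.map T.mulVecLin R = LinearMap.range (T * X).mulVecLin := by
    rw [Matrix.mulVecLin_mul, LinearMap.range_comp]
  have hEq : Submodule.map T.mulVecLin R = R := by
    apply Submodule.eq_of_le_of_finrank_le (hmap ▸ h1)
    rw [he, LinearEquiv.finrank_map_eq]
  apply factor_of_range_le
  have h2 : LinearMap.range (T⁻¹ * X).mulVecLin = Submodule.map (T⁻¹).mulVecLin R := by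
    rw [Matrix.mulVecLin_mul, LinearMap.range_comp]
  rw [h2]
  conv_lhs => rw [← hEq]
  rw [← Submodule.map_comp]
  have h3 : (T⁻¹).mulVecLin ∘ₗ T.mulVecLin = LinearMap.id := by
    rw [← Matrix.mulVecLin_mul, Matrix.nonsing_inv_mul T hT, Matrix.mulVecLin_one]
  rw [h3, Submodule.map_id]

lemma resolventId {n : ℕ} (M N : Matrix (Fin n) (Fin n) ℂ) (a b : ℂ)
    (ha : IsUnit (M - a • N).det) (hb : IsUnit (M - b • N).det) :
    (M - a • N)⁻¹ - (M - b • N)⁻¹ = (a - b) • ((M - a • N)⁻¹ * (N * (M - b • N)⁻¹)) := by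
  have key : (M - a • N)⁻¹ * (((M - b • N) - (M - a • N)) * (M - b • N)⁻¹)
      = (M - a • N)⁻¹ - (M - b • N)⁻¹ := by
    rw [sub_mul, mul_sub, Matrix.mul_nonsing_inv _ hb, mul_one, ← mul_assoc,
      Matrix.nonsing_inv_mul _ ha, one_mul]
  rw [← key]
  have h2 : (M - b • N) - (M - a • N) = (a - b) • N := by
    rw [sub_smul]; abel
  rw [h2]
  simp [smul_mul_assoc, mul_smul_comm, mul_assoc]

/-- Reproducing kernel identity: with `F(λ) = C(M - λN)⁻¹` and
`W(λ) = I - (1 - λ μ̄) F(λ) X F(μ)* j_{pq}` built from a Hermitian solution `P` of the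
Lyapunov–Stein equation and `X` with `XPX = X`, `PXP = P`, `rng X` invariant under `M, N`,
one has `F(λ) X F(ω)* = (j_{pq} - W(λ) j_{pq} W(ω)*)/(1 - λ ω̄)`. -/
theorem stmt16 {n p q : ℕ} (M N P X : Matrix (Fin n) (Fin n) ℂ)
    (C : Matrix (Fin p ⊕ Fin q) (Fin n) ℂ)
    (J : Matrix (Fin p ⊕ Fin q) (Fin p ⊕ Fin q) ℂ)
    (hJ : J = Matrix.fromBlocks (1 : Matrix (Fin p) (Fin p) ℂ) 0 0
      (-1 : Matrix (Fin q) (Fin q) ℂ))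
    (μ : ℂ) (hμ : μ * (starRingEnd ℂ) μ = 1) (hμdet : IsUnit (M - μ • N).det)
    (hP : P.IsHermitian) (hX : X.IsHermitian)
    (hLS : Mᴴ * P * M - Nᴴ * P * N = Cᴴ * J * C)
    (h1 : X * P * X = X) (h2 : P * X * P = P)
    (hinv : ∃ M₀ N₀ : Matrix (Fin n) (Fin n) ℂ, M * X = X * M₀ ∧ N * X = X * N₀) :
    let F : ℂ → Matrix (Fin p ⊕ Fin q) (Fin n) ℂ := fun z => C * (M - z • N)⁻¹
    let W : ℂ → Matrix (Fin p ⊕ Fin q) (Fin p ⊕ Fin q) ℂ :=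
      fun z => 1 - (1 - z * (starRingEnd ℂ) μ) • (F z * X * (F μ)ᴴ * J)
    ∀ lam ω : ℂ, IsUnit (M - lam • N).det → IsUnit (M - ω • N).det →
      lam * (starRingEnd ℂ) ω ≠ 1 →
      F lam * X * (F ω)ᴴ =
        (1 - lam * (starRingEnd ℂ) ω)⁻¹ • (J - W lam * J * (W ω)ᴴ) := by
  intro F W lam ω hl hw hne
  have hμ' : μ * star μ = 1 := hμ
  have hXe : Xᴴ = X := hX
  have hPe : Pᴴ = P := hP
  -- J facts
  have hJ2 : J * J = 1 := by
    rw [hJ, Matrix.fromBlocks_multiply]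
    simp [Matrix.fromBlocks_one]
  have hJH : Jᴴ = J := by
    rw [hJ, Matrix.fromBlocks_conjTranspose]
    simp
  have eJJ : ∀ {κ : Type} (Y : Matrix (Fin p ⊕ Fin q) κ ℂ), J * (J * Y) = Y := by
    intro κ Y; rw [← Matrix.mul_assoc, hJ2, Matrix.one_mul]
  -- conjTranspose of the pencil
  have hSH : ∀ z : ℂ, (M - z • N)ᴴ = Mᴴ - (star z) • Nᴴ := by
    intro z; rw [conjTranspose_sub, conjTranspose_smul]
  have hdetH : ∀ z : ℂ, IsUnit (M - z • N).det → IsUnit (Mᴴ - (star z) • Nᴴ).det := by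
    intro z hz
    rw [← hSH, Matrix.det_conjTranspose]
    exact hz.star
  -- abbreviations
  set Gl := (M - lam • N)⁻¹ with hGl
  set Gm := (M - μ • N)⁻¹ with hGm
  set Gw := (M - ω • N)⁻¹ with hGw
  set Hm := (Mᴴ - (star μ) • Nᴴ)⁻¹ with hHmdef
  set Hw := (Mᴴ - (star ω) • Nᴴ)⁻¹ with hHwdef
  have hHm : Gmᴴ = Hm := by rw [hGm, Matrix.conjTranspose_nonsing_inv, hSH]
  have hHw : Gwᴴ = Hw := by rw [hGw, Matrix.conjTranspose_nonsing_inv, hSH]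
  -- cancellation helpers
  have eSm : ∀ {κ : Type} (Y : Matrix (Fin n) κ ℂ), (M - μ • N) * (Gm * Y) = Y := by
    intro κ Y; rw [← Matrix.mul_assoc, hGm, Matrix.mul_nonsing_inv _ hμdet, Matrix.one_mul]
  have eHm : ∀ {κ : Type} (Y : Matrix (Fin n) κ ℂ), Hm * ((M - μ • N)ᴴ * Y) = Y := by
    intro κ Y
    rw [hSH, ← Matrix.mul_assoc, hHmdef, Matrix.nonsing_inv_mul _ (hdetH μ hμdet),
      Matrix.one_mul]
  -- invariance consequences
  obtain ⟨M₀, N₀, hM0, hN0⟩ := hinv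
  have hSmX : (M - μ • N) * X = X * (M₀ - μ • N₀) := by
    rw [sub_mul, mul_sub, hM0, smul_mul_assoc, hN0, mul_smul_comm]
  obtain ⟨G, hGfac⟩ := inv_factor (M - μ • N) X hμdet _ hSmX
  rw [← hGm] at hGfac
  have hGfac' : ∀ {κ : Type} (Z : Matrix (Fin n) κ ℂ), Gm * (X * Z) = X * (G * Z) := by
    intro κ Z; rw [← Matrix.mul_assoc, hGfac, Matrix.mul_assoc]
  have h1' : ∀ {κ : Type} (Z : Matrix (Fin n) κ ℂ), X * (P * (X * Z)) = X * Z := by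
    intro κ Z; rw [← Matrix.mul_assoc, ← Matrix.mul_assoc, h1]
  have hN0' : ∀ {κ : Type} (Z : Matrix (Fin n) κ ℂ), N * (X * Z) = X * (N₀ * Z) := by
    intro κ Z; rw [← Matrix.mul_assoc, hN0, Matrix.mul_assoc]
  have hinv1 : ∀ {κ : Type} (Z : Matrix (Fin n) κ ℂ),
      X * (P * (N * (Gm * (X * Z)))) = N * (Gm * (X * Z)) := by
    intro κ Z
    rw [hGfac' Z, hN0' (G * Z), h1']
  -- square (no trailing factor) version, for taking adjoints
  have hinv1n : X * (P * (N * (Gm * X))) = N * (Gm * X) := by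
    have := hinv1 (1 : Matrix (Fin n) (Fin n) ℂ)
    rwa [Matrix.mul_one] at this
  -- adjoint invariance consequence
  have hinv2n : X * (Hm * (Nᴴ * (P * X))) = X * (Hm * Nᴴ) := by
    have := congrArg conjTranspose hinv1n
    simpa only [conjTranspose_mul, hXe, hPe, hHm, Matrix.mul_assoc] using this
  have hinv2 : ∀ {κ : Type} (Z : Matrix (Fin n) κ ℂ),
      X * (Hm * (Nᴴ * (P * (X * Z)))) = X * (Hm * (Nᴴ * Z)) := by
    intro κ Z
    have := congrArg (· * Z) hinv2n
    simpa only [Matrix.mul_assoc] using this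
  -- Stein decomposition at μ
  have hstein : (M - μ • N)ᴴ * P * (M - μ • N) + μ • ((M - μ • N)ᴴ * P * N)
      + (star μ) • (Nᴴ * P * (M - μ • N)) = Cᴴ * J * C := by
    rw [← hLS]
    simp only [conjTranspose_sub, conjTranspose_smul, sub_mul, mul_sub,
      smul_mul_assoc, mul_smul_comm, smul_smul, smul_sub, sub_smul, starRingEnd_apply]
    match_scalars <;> first
      | ring1
      | linear_combination hμ'
      | linear_combination -hμ'
      | linear_combination (star μ) * hμ'
      | linear_combination -(star μ) * hμ'
      | linear_combination μ * hμ'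
      | linear_combination -μ * hμ'
      | linear_combination (μ - 1) * hμ'
      | linear_combination (1 - μ) * hμ'
      | linear_combination (star μ - 1) * hμ'
      | linear_combination (1 - star μ) * hμ'
  have hCJC : ∀ (Z : Matrix (Fin n) (Fin p ⊕ Fin q) ℂ),
      Cᴴ * (J * (C * Z)) = ((M - μ • N)ᴴ * P * (M - μ • N) + μ • ((M - μ • N)ᴴ * P * N)
        + (star μ) • (Nᴴ * P * (M - μ • N))) * Z := by
    intro Z
    rw [hstein, ← Matrix.mul_assoc, ← Matrix.mul_assoc]
  -- the sandwich identity
  have hsand : ∀ (Y : Matrix (Fin n) (Fin p ⊕ Fin q) ℂ),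
      X * (Hm * (Cᴴ * (J * (C * (Gm * (X * Y))))))
        = X * Y + μ • (N * (Gm * (X * Y))) + (star μ) • (X * (Hm * (Nᴴ * Y))) := by
    intro Y
    rw [hCJC]
    simp only [Matrix.add_mul, Matrix.smul_mul, Matrix.mul_add, Matrix.mul_smul,
      Matrix.mul_assoc]
    rw [eSm, eHm, h1', eHm, hinv1, hinv2]
  -- resolvent consequences
  have hres1 : Gl - Gm = (lam - μ) • (Gl * (N * Gm)) := by
    rw [hGl, hGm]; exact resolventId M N lam μ hl hμdet
  have hres2 : Hm - Hw = (star μ - star ω) • (Hm * (Nᴴ * Hw)) := by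
    rw [hHmdef, hHwdef]
    exact resolventId Mᴴ Nᴴ (star μ) (star ω) (hdetH μ hμdet) (hdetH ω hw)
  have hT1e : ((1 - lam * star μ) * μ) • (C * (Gl * (N * (Gm * (X * (Hw * Cᴴ))))))
      = C * (Gm * (X * (Hw * Cᴴ))) - C * (Gl * (X * (Hw * Cᴴ))) := by
    have h := congrArg (fun Z => C * (Z * (X * (Hw * Cᴴ)))) hres1
    simp only [Matrix.sub_mul, Matrix.mul_sub, Matrix.smul_mul, Matrix.mul_smul,
      Matrix.mul_assoc] at h
    have hscal : (1 - lam * star μ) * μ = -(lam - μ) := by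
      linear_combination (-lam) * hμ'
    rw [hscal, neg_smul, ← h, neg_sub]
  have hT2e : (star μ * (1 - star ω * μ)) • (C * (Gl * (X * (Hm * (Nᴴ * (Hw * Cᴴ))))))
      = C * (Gl * (X * (Hm * Cᴴ))) - C * (Gl * (X * (Hw * Cᴴ))) := by
    have h := congrArg (fun Z => C * (Gl * (X * (Z * Cᴴ)))) hres2
    simp only [Matrix.sub_mul, Matrix.mul_sub, Matrix.smul_mul, Matrix.mul_smul,
      Matrix.mul_assoc] at h
    have hscal : star μ * (1 - star ω * μ) = star μ - star ω := by
      linear_combination (-(star ω)) * hμ'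
    rw [hscal]
    exact h.symm
  -- unfold F and W
  have hFlam : F lam = C * Gl := rfl
  have hFμ : F μ = C * Gm := rfl
  have hFω : F ω = C * Gw := rfl
  have hFωH : (F ω)ᴴ = Hw * Cᴴ := by rw [hFω, conjTranspose_mul, hHw]
  have hFμH : (F μ)ᴴ = Hm * Cᴴ := by rw [hFμ, conjTranspose_mul, hHm]
  have hWlam : W lam = 1 - (1 - lam * star μ) • (C * (Gl * (X * (Hm * (Cᴴ * J))))) := by
    show 1 - (1 - lam * starRingEnd ℂ μ) • (F lam * X * (F μ)ᴴ * J) = _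
    rw [hFlam, hFμH]
    simp only [Matrix.mul_assoc, starRingEnd_apply]
  have hHmH : Hmᴴ = Gm := by rw [← hHm, conjTranspose_conjTranspose]
  have hWωH : (W ω)ᴴ = 1 - (1 - star ω * μ) • (J * (C * (Gm * (X * (Hw * Cᴴ))))) := by
    show (1 - (1 - ω * starRingEnd ℂ μ) • (F ω * X * (F μ)ᴴ * J))ᴴ = _
    rw [hFμH]
    simp only [conjTranspose_sub, conjTranspose_one, conjTranspose_smul, conjTranspose_mul,
      conjTranspose_conjTranspose, hJH, hXe, hFωH, hHmH, starRingEnd_apply, star_sub, star_one,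
      star_mul', star_star, Matrix.mul_assoc]
  -- expand J - W(lam) J W(ω)ᴴ
  have hexp : J - W lam * J * (W ω)ᴴ
      = (1 - lam * star μ) • (C * (Gl * (X * (Hm * Cᴴ))))
        + (1 - star ω * μ) • (C * (Gm * (X * (Hw * Cᴴ))))
        - ((1 - lam * star μ) * (1 - star ω * μ)) •
            (C * (Gl * (X * (Hm * (Cᴴ * (J * (C * (Gm * (X * (Hw * Cᴴ)))))))))) := by
    rw [hWlam, hWωH]
    simp only [Matrix.sub_mul, Matrix.mul_sub, Matrix.one_mul, Matrix.mul_one,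
      Matrix.smul_mul, Matrix.mul_smul, smul_smul, Matrix.mul_assoc, eJJ, hJ2]
    module
  rw [hsand (Hw * Cᴴ)] at hexp
  simp only [Matrix.mul_add, Matrix.mul_smul, smul_add, smul_smul] at hexp
  -- assemble
  have hmain : J - W lam * J * (W ω)ᴴ
      = (1 - lam * star ω) • (C * (Gl * (X * (Hw * Cᴴ)))) := by
    rw [hexp]
    calc _ = (1 - lam * star μ) • (C * (Gl * (X * (Hm * Cᴴ))))
          + (1 - star ω * μ) • (C * (Gm * (X * (Hw * Cᴴ))))
          - ((1 - lam * star μ) * (1 - star ω * μ)) • (C * (Gl * (X * (Hw * Cᴴ))))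
          - (1 - star ω * μ) • (((1 - lam * star μ) * μ) •
              (C * (Gl * (N * (Gm * (X * (Hw * Cᴴ)))))))
          - (1 - lam * star μ) • ((star μ * (1 - star ω * μ)) •
              (C * (Gl * (X * (Hm * (Nᴴ * (Hw * Cᴴ))))))) := by module
      _ = (1 - lam * star μ) • (C * (Gl * (X * (Hm * Cᴴ))))
          + (1 - star ω * μ) • (C * (Gm * (X * (Hw * Cᴴ))))
          - ((1 - lam * star μ) * (1 - star ω * μ)) • (C * (Gl * (X * (Hw * Cᴴ))))
          - (1 - star ω * μ) • (C * (Gm * (X * (Hw * Cᴴ))) - C * (Gl * (X * (Hw * Cᴴ))))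
          - (1 - lam * star μ) • (C * (Gl * (X * (Hm * Cᴴ))) - C * (Gl * (X * (Hw * Cᴴ)))) := by
            rw [hT1e, hT2e]
      _ = ((1 - lam * star μ) + (1 - star ω * μ)
            - (1 - lam * star μ) * (1 - star ω * μ)) • (C * (Gl * (X * (Hw * Cᴴ)))) := by
            module
      _ = (1 - lam * star ω) • (C * (Gl * (X * (Hw * Cᴴ)))) := by
            congr 1
            linear_combination (-lam) * (star ω) * hμ'
  have hDK : F lam * X * (F ω)ᴴ = C * (Gl * (X * (Hw * Cᴴ))) := by
    rw [hFlam, hFωH]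
    simp only [Matrix.mul_assoc]
  have hne' : (1 : ℂ) - lam * star ω ≠ 0 := sub_ne_zero.mpr (Ne.symm hne)
  rw [hDK, hmain]
  rw [show (starRingEnd ℂ) ω = star ω from rfl, smul_smul, inv_mul_cancel₀ hne', one_smul]
end

section
/- Under the hypotheses of the previous kernel identity (W(λ) = I_m − (1 − λ·conj(μ)) F(λ) X F(μ)* j_{pq} with M* P M − N* P N = C* j_{pq} C, XPX = X, PXP = P, rng X invariant under M and N, |μ|=1), one has for every v ∈ ker P: j_{pq} W^#(λ) j_{pq} F(λ) v = F(μ)(I_n − X P)(M − μN)(M − λN)⁻¹ v, where W^#(λ) = W(1/conj(λ))*. -/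
open Matrix

/-- With `F(λ) = C(M - λN)⁻¹` and `W(λ) = I - (1 - λ μ̄) F(λ) X F(μ)* j_{pq}` as in the kernel
identity, for every `v ∈ ker P`:
`j_{pq} W^#(λ) j_{pq} F(λ) v = F(μ)(I - XP)(M - μN)(M - λN)⁻¹ v`. -/
theorem stmt17 {n p q : ℕ} (M N P X : Matrix (Fin n) (Fin n) ℂ)
    (C : Matrix (Fin p ⊕ Fin q) (Fin n) ℂ)
    (J : Matrix (Fin p ⊕ Fin q) (Fin p ⊕ Fin q) ℂ)
    (hJ : J = Matrix.fromBlocks (1 : Matrix (Fin p) (Fin p) ℂ) 0 0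
      (-1 : Matrix (Fin q) (Fin q) ℂ))
    (μ : ℂ) (hμ : μ * (starRingEnd ℂ) μ = 1) (hμdet : IsUnit (M - μ • N).det)
    (hP : P.IsHermitian) (hX : X.IsHermitian)
    (hLS : Mᴴ * P * M - Nᴴ * P * N = Cᴴ * J * C)
    (h1 : X * P * X = X) (h2 : P * X * P = P)
    (hinv : ∃ M₀ N₀ : Matrix (Fin n) (Fin n) ℂ, M * X = X * M₀ ∧ N * X = X * N₀)
    (lam : ℂ) (hlam : lam ≠ 0)
    (hd1 : IsUnit (M - lam • N).det)
    (hd2 : IsUnit (M - (((starRingEnd ℂ) lam)⁻¹) • N).det)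
    (v : Fin n → ℂ) (hv : P *ᵥ v = 0) :
    let F : ℂ → Matrix (Fin p ⊕ Fin q) (Fin n) ℂ := fun z => C * (M - z • N)⁻¹
    let W : ℂ → Matrix (Fin p ⊕ Fin q) (Fin p ⊕ Fin q) ℂ :=
      fun z => 1 - (1 - z * (starRingEnd ℂ) μ) • (F z * X * (F μ)ᴴ * J)
    (J * (W (((starRingEnd ℂ) lam)⁻¹))ᴴ * J * F lam) *ᵥ v =
      (F μ * (1 - X * P) * (M - μ • N) * (M - lam • N)⁻¹) *ᵥ v := by
  intro F W
  set s : ℂ := ((starRingEnd ℂ) lam)⁻¹ with hs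
  have hcs : (starRingEnd ℂ) s = lam⁻¹ := by
    simp [hs, map_inv₀]
  have hcs' : (star s : ℂ) = lam⁻¹ := hcs
  have hJJ : J * J = 1 := by
    rw [hJ, Matrix.fromBlocks_multiply]
    simp [← Matrix.fromBlocks_one]
  have hJJ' : ∀ A : Matrix (Fin p ⊕ Fin q) (Fin n) ℂ, J * (J * A) = A := fun A => by
    rw [← Matrix.mul_assoc, hJJ, Matrix.one_mul]
  have hJH : Jᴴ = J := by
    rw [hJ]
    simp [Matrix.fromBlocks_conjTranspose]
  have hAl1 : (M - lam • N) * (M - lam • N)⁻¹ = 1 := Matrix.mul_nonsing_inv _ hd1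
  have hAmu : (M - μ • N)⁻¹ * (M - μ • N) = 1 := Matrix.nonsing_inv_mul _ hμdet
  have hdsH : IsUnit ((M - s • N)ᴴ).det := by
    rw [Matrix.det_conjTranspose]; exact hd2.star
  have hAs1 : ((M - s • N)ᴴ)⁻¹ * (M - s • N)ᴴ = 1 := Matrix.nonsing_inv_mul _ hdsH
  have hAsH : (M - s • N)ᴴ = Mᴴ - lam⁻¹ • Nᴴ := by
    rw [Matrix.conjTranspose_sub, Matrix.conjTranspose_smul, hcs']
  set c : ℂ := 1 - lam⁻¹ * μ with hc
  -- Step C : key algebraic identity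
  have hkey : Mᴴ * P * M - Nᴴ * P * N
      = (M - s • N)ᴴ * (P * M) + lam⁻¹ • (Nᴴ * P * (M - lam • N)) := by
    rw [hAsH]
    have h : lam⁻¹ * lam = 1 := inv_mul_cancel₀ hlam
    simp only [Matrix.sub_mul, Matrix.mul_sub, smul_mul_assoc, mul_smul_comm, smul_smul,
      h, one_smul, smul_sub, mul_assoc]
    abel
  -- Step B
  have hFsJ : (F s)ᴴ * J * F lam
      = P * M * (M - lam • N)⁻¹ + lam⁻¹ • (((M - s • N)ᴴ)⁻¹ * (Nᴴ * P)) := by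
    have h0 : (F s)ᴴ * J * F lam
        = ((M - s • N)ᴴ)⁻¹ * ((Mᴴ * P * M - Nᴴ * P * N) * (M - lam • N)⁻¹) := by
      simp only [F]
      rw [hLS]
      simp only [Matrix.conjTranspose_mul, Matrix.conjTranspose_nonsing_inv, Matrix.mul_assoc]
    rw [h0, hkey]
    rw [Matrix.add_mul, Matrix.mul_add]
    congr 1
    · rw [← Matrix.mul_assoc, ← Matrix.mul_assoc, hAs1, Matrix.one_mul]
    · rw [Matrix.smul_mul, Matrix.mul_smul]
      congr 1
      calc ((M - s • N)ᴴ)⁻¹ * (Nᴴ * P * (M - lam • N) * (M - lam • N)⁻¹)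
          = ((M - s • N)ᴴ)⁻¹ * (Nᴴ * P * ((M - lam • N) * (M - lam • N)⁻¹)) := by
            rw [Matrix.mul_assoc (Nᴴ * P)]
        _ = ((M - s • N)ᴴ)⁻¹ * (Nᴴ * P) := by rw [hAl1, Matrix.mul_one]
  -- Step A
  have hcc : (star (1 - s * (starRingEnd ℂ) μ) : ℂ) = c := by
    have h' : (starRingEnd ℂ) (1 - s * (starRingEnd ℂ) μ) = c := by
      rw [map_sub, _root_.map_one, _root_.map_mul, hcs, Complex.conj_conj]
    exact h'
  have hWs : (W s)ᴴ = 1 - c • (J * (F μ * (X * (F s)ᴴ))) := by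
    simp only [W, Matrix.conjTranspose_sub, Matrix.conjTranspose_smul,
      Matrix.conjTranspose_one, Matrix.conjTranspose_mul, hJH, hX.eq,
      Matrix.conjTranspose_conjTranspose, hcc, Matrix.mul_assoc]
  have hstep : J * (W s)ᴴ * J * F lam
      = F lam - c • (F μ * (X * ((F s)ᴴ * (J * F lam)))) := by
    rw [hWs]
    simp only [Matrix.sub_mul, Matrix.mul_sub, Matrix.one_mul, Matrix.mul_one,
      Matrix.mul_smul, Matrix.smul_mul, Matrix.mul_assoc, hJJ']
  -- vector facts
  set w : Fin n → ℂ := (M - lam • N)⁻¹ *ᵥ v with hw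
  have hAlw : (M - lam • N) *ᵥ w = v := by
    rw [hw, Matrix.mulVec_mulVec, hAl1, Matrix.one_mulVec]
  have hPw : P *ᵥ (M *ᵥ w) = lam • (P *ᵥ (N *ᵥ w)) := by
    have h := congrArg (fun x => P *ᵥ x) hAlw
    simp only [Matrix.sub_mulVec, Matrix.smul_mulVec, Matrix.mulVec_sub,
      Matrix.mulVec_smul, hv] at h
    exact sub_eq_zero.mp h
  -- assemble LHS
  have hGv : ((F s)ᴴ * J * F lam) *ᵥ v = P *ᵥ (M *ᵥ w) := by
    rw [hFsJ]
    simp only [Matrix.add_mulVec, Matrix.smul_mulVec, ← Matrix.mulVec_mulVec, hv,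
      Matrix.mulVec_zero, smul_zero, add_zero, ← hw]
  have hLHS : (J * (W s)ᴴ * J * F lam) *ᵥ v
      = F lam *ᵥ v - c • ((F μ * X) *ᵥ (P *ᵥ (M *ᵥ w))) := by
    rw [hstep, Matrix.sub_mulVec, Matrix.smul_mulVec]
    congr 2
    calc (F μ * (X * ((F s)ᴴ * (J * F lam)))) *ᵥ v
        = (F μ * X) *ᵥ (((F s)ᴴ * J * F lam) *ᵥ v) := by
          simp only [← Matrix.mulVec_mulVec, Matrix.mul_assoc]
      _ = (F μ * X) *ᵥ (P *ᵥ (M *ᵥ w)) := by rw [hGv]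
  have hFmuA : F μ * (M - μ • N) = C := by
    show C * (M - μ • N)⁻¹ * (M - μ • N) = C
    rw [Matrix.mul_assoc, hAmu, Matrix.mul_one]
  -- assemble RHS
  have hRHS : (F μ * (1 - X * P) * (M - μ • N) * (M - lam • N)⁻¹) *ᵥ v
      = F lam *ᵥ v - (F μ * X) *ᵥ (P *ᵥ ((M - μ • N) *ᵥ w)) := by
    have hm : F μ * (1 - X * P) * (M - μ • N) * (M - lam • N)⁻¹
        = F lam - F μ * (X * (P * ((M - μ • N) * (M - lam • N)⁻¹))) := by
      have hFmuA' := hFmuA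
      generalize hA : (M - μ • N) = A at hFmuA' ⊢
      rw [Matrix.mul_sub, Matrix.mul_one, Matrix.sub_mul, Matrix.sub_mul, hFmuA']
      congr 1
      simp only [Matrix.mul_assoc]
    rw [hm, Matrix.sub_mulVec]
    congr 1
    simp only [← Matrix.mulVec_mulVec, ← hw]
  rw [hLHS, hRHS]
  congr 1
  have hvec : c • (P *ᵥ (M *ᵥ w)) = P *ᵥ ((M - μ • N) *ᵥ w) := by
    rw [hPw, Matrix.sub_mulVec, Matrix.mulVec_sub, hPw, Matrix.smul_mulVec,
      Matrix.mulVec_smul, smul_smul, ← sub_smul]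
    congr 1
    rw [hc]
    field_simp
  rw [← hvec, Matrix.mulVec_smul]
end

section
/- Let A = diag(A₁, A₂) with σ(A₁) in the open right half-plane and σ(A₂) in the open left half-plane, C ∈ ℂ^{m×n}, J = j_{pq}, P Hermitian with A* P + P A + C* J C = 0, and X Hermitian with X A* + A X + X C* J C X = 0, XPX = X, PXP = P. Set F(λ) = C(A − λ I)⁻¹ and W(λ) = I_m + C(A − λ I)⁻¹ X C* J. Then W(λ)⁻¹ F(λ) X = −C X (A* + λ I)⁻¹ for all λ ∉ σ(A) ∪ σ(−A*). -/
/-!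
Write `D = A - λ`, `B = Aᴴ + λ`, `G = Cᴴ J C` and `W = 1 + C D⁻¹ X Cᴴ J`. The Riccati equation
says `(A + X G - λ) X = -X B`, and expanding with it gives `W (-C X B⁻¹) = C D⁻¹ X`; so everything
rests on `W` being invertible. By the matrix determinant lemma `det (D + X G) = det D * det W`,
which reduces this to the invertibility of the closed-loop matrix `M = A + X G - λ`.
Here the Lyapunov equation and `X P X = X` enter: `Q = X P` is idempotent,
`M (1 - Q) = (1 - Q) D (1 - Q)` and `(1 - Q) D Q = 0`, so that
`-X B⁻¹ P + (1 - Q) D⁻¹ (1 - Q)` is an explicit right inverse of `M`.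
-/

open Matrix

theorem spectrum.isUnit_sub_smul_one_of_notMem {R A : Type*} [CommRing R] [Ring A] [Algebra R A]
    {a : A} {r : R} (h : r ∉ spectrum R a) : IsUnit (a - r • 1) := by
  rw [spectrum.notMem_iff, Algebra.algebraMap_eq_smul_one] at h
  simpa only [neg_sub] using h.neg

theorem isIdempotentElem_mul_of_mul_mul_eq {M : Type*} [Semigroup M] {x p : M}
    (h : x * p * x = x) : IsIdempotentElem (x * p) := by
  rw [IsIdempotentElem, ← mul_assoc, h]

section Riccati

variable {R n : Type*} [CommRing R] [Fintype n] [DecidableEq n]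
  {A A' X P G : Matrix n n R} {lam : R}

theorem riccati_shift (hRic : X * A' + A * X + X * G * X = 0) (lam : R) :
    (A - lam • 1) * X + X * G * X = -(X * (A' + lam • 1)) := by
  rw [← sub_eq_zero, ← hRic]
  simp only [sub_mul, mul_add, Matrix.smul_mul, Matrix.mul_smul, one_mul, mul_one]
  abel

theorem closedLoop_mul (hRic : X * A' + A * X + X * G * X = 0) (lam : R) :
    (A + X * G - lam • 1) * X = -(X * (A' + lam • 1)) := by
  rw [← riccati_shift hRic lam]
  simp only [add_mul, sub_mul]
  abel

theorem one_sub_mul_sub_smul_one_mul_eq_zero (hRic : X * A' + A * X + X * G * X = 0)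
    (hXPX : X * P * X = X) :
    (1 - X * P) * (A - lam • 1) * (X * P) = 0 := by
  have hDX : (A - lam • 1) * X = X * (-(A' + lam • 1) - G * X) := by
    rw [mul_sub, mul_neg, ← riccati_shift hRic lam, Matrix.mul_assoc]
    abel
  calc _ = (1 - X * P) * X * (-(A' + lam • 1) - G * X) * P := by
        rw [← Matrix.mul_assoc, Matrix.mul_assoc _ _ X, hDX, Matrix.mul_assoc _ X]
    _ = 0 := by rw [sub_mul, one_mul, hXPX, sub_self, zero_mul, zero_mul]

theorem closedLoop_mul_one_sub (hRic : X * A' + A * X + X * G * X = 0)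
    (hLyap : A' * P + P * A + G = 0) (hXPX : X * P * X = X) :
    (A + X * G - lam • 1) * (1 - X * P) = (1 - X * P) * (A - lam • 1) * (1 - X * P) := by
  have hQ : X * P * (1 - X * P) = 0 := by
    rw [mul_sub, mul_one, (isIdempotentElem_mul_of_mul_mul_eq hXPX).eq, sub_self]
  have hG : G = -(A' * P) - P * A := by rw [← sub_eq_zero, ← hLyap]; abel
  have hXA' : X * A' * P * (1 - X * P) = 0 := by
    have hXA'_eq : X * A' = -((A + X * G) * X) := by rw [← sub_eq_zero, ← hRic]; noncomm_ring
    calc X * A' * P * (1 - X * P) = -(A + X * G) * (X * P * (1 - X * P)) := by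
          rw [hXA'_eq]; noncomm_ring
      _ = 0 := by rw [hQ, mul_zero]
  calc (A + X * G - lam • 1) * (1 - X * P)
      = (A - lam • 1) * (1 - X * P) - X * P * A * (1 - X * P) - X * A' * P * (1 - X * P) := by
        rw [hG]; noncomm_ring
    _ = (1 - X * P) * (A - lam • 1) * (1 - X * P) - lam • (X * P * (1 - X * P)) := by
        rw [hXA', sub_zero]
        simp only [mul_sub, sub_mul, mul_one, one_mul, Matrix.smul_mul, Matrix.mul_smul, smul_sub,
          ← Matrix.mul_assoc]
        abel
    _ = (1 - X * P) * (A - lam • 1) * (1 - X * P) := by rw [hQ, smul_zero, sub_zero]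

theorem closedLoop_mul_rightInverse (hRic : X * A' + A * X + X * G * X = 0)
    (hLyap : A' * P + P * A + G = 0) (hXPX : X * P * X = X)
    (hD : IsUnit (A - lam • 1).det) (hB : IsUnit (A' + lam • 1).det) :
    (A + X * G - lam • 1) *
        (-(X * (A' + lam • 1)⁻¹ * P) + (1 - X * P) * (A - lam • 1)⁻¹ * (1 - X * P)) = 1 := by
  have hQ := isIdempotentElem_mul_of_mul_mul_eq hXPX
  have hRange : (A + X * G - lam • 1) * -(X * (A' + lam • 1)⁻¹ * P) = X * P := by
    rw [mul_neg, ← Matrix.mul_assoc, ← Matrix.mul_assoc, closedLoop_mul hRic, neg_mul,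
      Matrix.mul_assoc X, mul_nonsing_inv _ hB, mul_one, neg_mul, neg_neg]
  have hKer : (A + X * G - lam • 1) * ((1 - X * P) * (A - lam • 1)⁻¹ * (1 - X * P)) =
      1 - X * P := by
    calc _ = (1 - X * P) * (A - lam • 1) * (1 - X * P) * (A - lam • 1)⁻¹ * (1 - X * P) := by
          rw [← closedLoop_mul_one_sub hRic hLyap hXPX]; simp only [Matrix.mul_assoc]
      _ = (1 - X * P) * ((A - lam • 1) * (A - lam • 1)⁻¹) * (1 - X * P)
            - (1 - X * P) * (A - lam • 1) * (X * P) * (A - lam • 1)⁻¹ * (1 - X * P) := by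
          noncomm_ring
      _ = 1 - X * P := by
          rw [mul_nonsing_inv _ hD, one_sub_mul_sub_smul_one_mul_eq_zero hRic hXPX, mul_one,
            hQ.one_sub.eq, zero_mul, zero_mul, sub_zero]
  rw [mul_add, hRange, hKer, add_sub_cancel]

theorem isUnit_det_closedLoop (hRic : X * A' + A * X + X * G * X = 0)
    (hLyap : A' * P + P * A + G = 0) (hXPX : X * P * X = X)
    (hD : IsUnit (A - lam • 1).det) (hB : IsUnit (A' + lam • 1).det) :
    IsUnit (A + X * G - lam • 1).det :=
  isUnit_det_of_right_inverse (closedLoop_mul_rightInverse hRic hLyap hXPX hD hB)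

variable {m : Type*} [Fintype m] [DecidableEq m] {C : Matrix m n R} {L : Matrix n m R}

theorem isUnit_det_one_add_resolvent (hRic : X * A' + A * X + X * (L * C) * X = 0)
    (hLyap : A' * P + P * A + L * C = 0) (hXPX : X * P * X = X)
    (hD : IsUnit (A - lam • 1).det) (hB : IsUnit (A' + lam • 1).det) :
    IsUnit (1 + C * (A - lam • 1)⁻¹ * X * L).det := by
  have hM := isUnit_det_closedLoop hRic hLyap hXPX hD hB
  rw [show A + X * (L * C) - lam • 1 = A - lam • 1 + X * L * C by
    rw [Matrix.mul_assoc]; abel, det_add_mul _ _ hD, ← Matrix.mul_assoc] at hM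
  exact isUnit_of_mul_isUnit_right hM

theorem one_add_resolvent_mul (hRic : X * A' + A * X + X * (L * C) * X = 0)
    (hD : IsUnit (A - lam • 1).det) (hB : IsUnit (A' + lam • 1).det) :
    (1 + C * (A - lam • 1)⁻¹ * X * L) * -(C * X * (A' + lam • 1)⁻¹) =
      C * (A - lam • 1)⁻¹ * X := by
  have hXGX : X * (L * C) * X = -(X * (A' + lam • 1)) - (A - lam • 1) * X := by
    rw [← riccati_shift hRic lam]; abel
  calc _ = -(C * X * (A' + lam • 1)⁻¹)
          - C * (A - lam • 1)⁻¹ * (X * (L * C) * X) * (A' + lam • 1)⁻¹ := by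
        simp only [Matrix.add_mul, Matrix.one_mul, Matrix.mul_neg, Matrix.mul_assoc]
        abel
    _ = -(C * X * (A' + lam • 1)⁻¹)
          + C * (A - lam • 1)⁻¹ * X * ((A' + lam • 1) * (A' + lam • 1)⁻¹)
          + C * ((A - lam • 1)⁻¹ * (A - lam • 1)) * X * (A' + lam • 1)⁻¹ := by
        rw [hXGX]
        simp only [Matrix.mul_sub, Matrix.sub_mul, Matrix.mul_neg, Matrix.neg_mul,
          Matrix.mul_assoc]
        abel
    _ = C * (A - lam • 1)⁻¹ * X := by
        rw [mul_nonsing_inv _ hB, nonsing_inv_mul _ hD, Matrix.mul_one, Matrix.mul_one]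
        abel

theorem inv_one_add_resolvent_mul (hRic : X * A' + A * X + X * (L * C) * X = 0)
    (hLyap : A' * P + P * A + L * C = 0) (hXPX : X * P * X = X)
    (hD : IsUnit (A - lam • 1).det) (hB : IsUnit (A' + lam • 1).det) :
    (1 + C * (A - lam • 1)⁻¹ * X * L)⁻¹ * (C * (A - lam • 1)⁻¹) * X =
      -(C * X * (A' + lam • 1)⁻¹) := by
  have hW := isUnit_det_one_add_resolvent hRic hLyap hXPX hD hB
  calc _ = (1 + C * (A - lam • 1)⁻¹ * X * L)⁻¹ *
        ((1 + C * (A - lam • 1)⁻¹ * X * L) * -(C * X * (A' + lam • 1)⁻¹)) := by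
        rw [one_add_resolvent_mul hRic hD hB, Matrix.mul_assoc]
    _ = _ := by rw [← Matrix.mul_assoc, nonsing_inv_mul _ hW, Matrix.one_mul]

end Riccati

theorem stmt18_general {n₁ n₂ p q : ℕ}
    (A : Matrix (Fin n₁ ⊕ Fin n₂) (Fin n₁ ⊕ Fin n₂) ℂ)
    (C : Matrix (Fin p ⊕ Fin q) (Fin n₁ ⊕ Fin n₂) ℂ)
    (J : Matrix (Fin p ⊕ Fin q) (Fin p ⊕ Fin q) ℂ)
    (P X : Matrix (Fin n₁ ⊕ Fin n₂) (Fin n₁ ⊕ Fin n₂) ℂ)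
    (hLyap : Aᴴ * P + P * A + Cᴴ * J * C = 0)
    (hRic : X * Aᴴ + A * X + X * Cᴴ * J * C * X = 0)
    (h1 : X * P * X = X)
    (lam : ℂ) (hl1 : lam ∉ spectrum ℂ A) (hl2 : lam ∉ spectrum ℂ (-(Aᴴ))) :
    (1 + C * (A - lam • 1)⁻¹ * X * Cᴴ * J)⁻¹ * (C * (A - lam • 1)⁻¹) * X =
      -(C * X * (Aᴴ + lam • 1)⁻¹) := by
  have hD : IsUnit (A - lam • 1).det :=
    (isUnit_iff_isUnit_det _).mp (spectrum.isUnit_sub_smul_one_of_notMem hl1)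
  have hB : IsUnit (Aᴴ + lam • 1).det := by
    rw [← isUnit_iff_isUnit_det, show Aᴴ + lam • 1 = -(-Aᴴ - lam • 1) by abel]
    exact (spectrum.isUnit_sub_smul_one_of_notMem hl2).neg
  rw [Matrix.mul_assoc _ Cᴴ J]
  exact inv_one_add_resolvent_mul (by simpa only [Matrix.mul_assoc] using hRic) hLyap h1 hD hB

/-- Half-plane setting: with `A = diag(A₁, A₂)`, `σ(A₁)` in the open right half-plane,
`σ(A₂)` in the open left half-plane, `P` a Hermitian solution of `Aᴴ P + P A + Cᴴ J C = 0`,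
`X` Hermitian with `X Aᴴ + A X + X Cᴴ J C X = 0`, `XPX = X`, `PXP = P`,
`F(λ) = C(A - λ)⁻¹` and `W(λ) = I + C(A - λ)⁻¹ X Cᴴ J`, one has
`W(λ)⁻¹ F(λ) X = -C X (Aᴴ + λ)⁻¹` for all `λ ∉ σ(A) ∪ σ(-Aᴴ)`. -/
theorem stmt18 {n₁ n₂ p q : ℕ}
    (A₁ : Matrix (Fin n₁) (Fin n₁) ℂ) (A₂ : Matrix (Fin n₂) (Fin n₂) ℂ)
    (hA₁ : ∀ z ∈ spectrum ℂ A₁, 0 < z.re) (hA₂ : ∀ z ∈ spectrum ℂ A₂, z.re < 0)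
    (A : Matrix (Fin n₁ ⊕ Fin n₂) (Fin n₁ ⊕ Fin n₂) ℂ)
    (hA : A = Matrix.fromBlocks A₁ 0 0 A₂)
    (C : Matrix (Fin p ⊕ Fin q) (Fin n₁ ⊕ Fin n₂) ℂ)
    (J : Matrix (Fin p ⊕ Fin q) (Fin p ⊕ Fin q) ℂ)
    (hJ : J = Matrix.fromBlocks (1 : Matrix (Fin p) (Fin p) ℂ) 0 0
      (-1 : Matrix (Fin q) (Fin q) ℂ))
    (P X : Matrix (Fin n₁ ⊕ Fin n₂) (Fin n₁ ⊕ Fin n₂) ℂ)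
    (hP : P.IsHermitian) (hX : X.IsHermitian)
    (hLyap : Aᴴ * P + P * A + Cᴴ * J * C = 0)
    (hRic : X * Aᴴ + A * X + X * Cᴴ * J * C * X = 0)
    (h1 : X * P * X = X) (h2 : P * X * P = P)
    (lam : ℂ) (hl1 : lam ∉ spectrum ℂ A) (hl2 : lam ∉ spectrum ℂ (-(Aᴴ))) :
    (1 + C * (A - lam • 1)⁻¹ * X * Cᴴ * J)⁻¹ * (C * (A - lam • 1)⁻¹) * X =
      -(C * X * (Aᴴ + lam • 1)⁻¹) :=
  stmt18_general A C J P X hLyap hRic h1 lam hl1 hl2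
end
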